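/- arXiv:1712.01940 — 2 statements merged into one kernel-verified Lean document; each statement's English description precedes it below -/
import Mathlib

section
/- Let r : D⊗D → D⊗D be a non-degenerate coalgebra automorphism that induces a non-degenerate set-theoretic solution r₀ of the braid equation on X×X. Let S = [g,h]×[i,j]×[k,l] ⊆ T = [a,b]×[c,d]×[e,f] be closed intervals of X³ as above, let (p,q,s) ∈ S, and let S₁ := [(g,i,k),(p,q,s)], T₁ := [(a,c,e),(p,q,s)], S₂ := [(p,q,s),(h,j,l)], T₂ := [(p,q,s),(b,d,f)] be the splitting of the inclusion S ⊆ T at (p,q,s). Then LBE(S,T) = LBE(S₁,T₁)·LBE(S₂,T₂) and RBE(S,T) = RBE(S₁,T₁)·RBE(S₂,T₂). -/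
open Finsupp

namespace BraidPaper

/-- The set of ordered pairs `Y = {(a,b) : a ≤ b}` indexing the basis of the
incidence coalgebra of `X`. -/
abbrev Y (X : Type) [PartialOrder X] : Type := {p : X × X // p.1 ≤ p.2}

/-- The incidence coalgebra `D` of `X`, modelled as the free `K`-module on `Y`. -/
abbrev Inc (K X : Type) [Field K] [PartialOrder X] : Type := Y X →₀ K

/-- `D ⊗ D`, modelled as the free `K`-module on `Y × Y`. -/
abbrev Inc2 (K X : Type) [Field K] [PartialOrder X] : Type := (Y X × Y X) →₀ K

/-- `D ⊗ D ⊗ D`, modelled as the free `K`-module on `Y × Y × Y`. -/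
abbrev Inc3 (K X : Type) [Field K] [PartialOrder X] : Type := (Y X × Y X × Y X) →₀ K

/-- `(D ⊗ D) ⊗ (D ⊗ D)`, modelled as the free `K`-module on `(Y × Y) × (Y × Y)`. -/
abbrev Inc4 (K X : Type) [Field K] [PartialOrder X] : Type :=
  ((Y X × Y X) × (Y X × Y X)) →₀ K

variable {K X : Type} [Field K] [PartialOrder X] [DecidableEq X]
  [@DecidableRel X X (· ≤ ·)] [LocallyFiniteOrder X]

/-- The coefficients `λ_{a|b|c|d}^{e|f|g|h}` of a linear endomorphism of `D ⊗ D`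
(defined to be `0` unless `a ≤ b`, `c ≤ d`, `e ≤ f` and `g ≤ h`). -/
noncomputable def lam (r : Inc2 K X →ₗ[K] Inc2 K X) (a b c d e f g h : X) : K :=
  if h1 : a ≤ b then if h2 : c ≤ d then if h3 : e ≤ f then if h4 : g ≤ h then
    (r (single (⟨(a, b), h1⟩, ⟨(c, d), h2⟩) 1)) (⟨(e, f), h3⟩, ⟨(g, h), h4⟩)
  else 0 else 0 else 0 else 0

/-- The counit of `D ⊗ D`. -/
noncomputable def eps2 : Inc2 K X →ₗ[K] K :=
  Finsupp.lsum K fun pq =>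
    if pq.1.1.1 = pq.1.1.2 ∧ pq.2.1.1 = pq.2.1.2 then LinearMap.id else 0

/-- The comultiplication of `D ⊗ D`. -/
noncomputable def comul2 : Inc2 K X →ₗ[K] Inc4 K X :=
  Finsupp.lsum K fun pq => LinearMap.toSpanSingleton K _ <|
    ∑ x ∈ (Finset.Icc pq.1.1.1 pq.1.1.2).attach,
      ∑ y ∈ (Finset.Icc pq.2.1.1 pq.2.1.2).attach,
        single ((⟨(pq.1.1.1, x.1), (Finset.mem_Icc.mp x.2).1⟩,
                 ⟨(pq.2.1.1, y.1), (Finset.mem_Icc.mp y.2).1⟩),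
                (⟨(x.1, pq.1.1.2), (Finset.mem_Icc.mp x.2).2⟩,
                 ⟨(y.1, pq.2.1.2), (Finset.mem_Icc.mp y.2).2⟩)) (1 : K)

/-- The tensor product `r ⊗ s` of two linear endomorphisms of `D ⊗ D`, in the
free-module model. -/
noncomputable def tmap (r s : Inc2 K X →ₗ[K] Inc2 K X) : Inc4 K X →ₗ[K] Inc4 K X :=
  Finsupp.lsum K fun pq => LinearMap.toSpanSingleton K _ <|
    (r (single pq.1 1)).sum fun p a => (s (single pq.2 1)).sum fun q b =>
      single (p, q) (a * b)

/-- `r` is a coalgebra automorphism of `D ⊗ D`. -/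
def IsCoalgAuto (r : Inc2 K X →ₗ[K] Inc2 K X) : Prop :=
  Function.Bijective ⇑r ∧ comul2 ∘ₗ r = tmap r r ∘ₗ comul2 ∧ eps2 ∘ₗ r = eps2

/-- `D ⊗ ε : D ⊗ D → D`. -/
noncomputable def rcu : Inc2 K X →ₗ[K] Inc K X :=
  Finsupp.lsum K fun pq => LinearMap.toSpanSingleton K _ <|
    if pq.2.1.1 = pq.2.1.2 then single pq.1 (1 : K) else 0

/-- `ε ⊗ D : D ⊗ D → D`. -/
noncomputable def lcu : Inc2 K X →ₗ[K] Inc K X :=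
  Finsupp.lsum K fun pq => LinearMap.toSpanSingleton K _ <|
    if pq.1.1.1 = pq.1.1.2 then single pq.2 (1 : K) else 0

/-- `(D ⊗ σ) ∘ (Δ ⊗ D)` where `σ := (D ⊗ ε) ∘ r`. -/
noncomputable def ndeg1 (r : Inc2 K X →ₗ[K] Inc2 K X) : Inc2 K X →ₗ[K] Inc2 K X :=
  Finsupp.lsum K fun pq => LinearMap.toSpanSingleton K _ <|
    ∑ x ∈ (Finset.Icc pq.1.1.1 pq.1.1.2).attach,
      ((rcu ∘ₗ r) (single ((⟨(x.1, pq.1.1.2), (Finset.mem_Icc.mp x.2).2⟩ : Y X), pq.2) 1)).sum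
        fun s a => single ((⟨(pq.1.1.1, x.1), (Finset.mem_Icc.mp x.2).1⟩ : Y X), s) a

/-- `(τ ⊗ D) ∘ (D ⊗ Δ)` where `τ := (ε ⊗ D) ∘ r`. -/
noncomputable def ndeg2 (r : Inc2 K X →ₗ[K] Inc2 K X) : Inc2 K X →ₗ[K] Inc2 K X :=
  Finsupp.lsum K fun pq => LinearMap.toSpanSingleton K _ <|
    ∑ y ∈ (Finset.Icc pq.2.1.1 pq.2.1.2).attach,
      ((lcu ∘ₗ r) (single (pq.1, (⟨(pq.2.1.1, y.1), (Finset.mem_Icc.mp y.2).1⟩ : Y X)) 1)).sum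
        fun s a => single (s, (⟨(y.1, pq.2.1.2), (Finset.mem_Icc.mp y.2).2⟩ : Y X)) a

/-- `r` is non-degenerate. -/
def NonDeg (r : Inc2 K X →ₗ[K] Inc2 K X) : Prop :=
  Function.Bijective ⇑(ndeg1 r) ∧ Function.Bijective ⇑(ndeg2 r)

/-- The set-map `r₀(a,c) = (ᵃc, aᶜ)` built from left translations `lt` (so
`ᵃc = lt a c`) and right translations `rt` (so `aᶜ = rt a c`). -/
def r0map (lt rt : X → X → X) : X × X → X × X := fun p => (lt p.1 p.2, rt p.1 p.2)

/-- The set-map `r₀` is non-degenerate. -/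
def NonDeg0 (lt rt : X → X → X) : Prop :=
  (∀ a : X, Function.Bijective (lt a)) ∧ (∀ c : X, Function.Bijective (fun a => rt a c))

def m12 (f : X × X → X × X) : X × X × X → X × X × X :=
  fun t => ((f (t.1, t.2.1)).1, (f (t.1, t.2.1)).2, t.2.2)

def m23 (f : X × X → X × X) : X × X × X → X × X × X := fun t => (t.1, f t.2)

/-- `f : X × X → X × X` is a set-theoretic solution of the braid equation. -/
def Braid0 (f : X × X → X × X) : Prop :=
  m12 f ∘ m23 f ∘ m12 f = m23 f ∘ m12 f ∘ m23 f

/-- `r` induces `r₀` on `X × X`. -/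
def Induces (r : Inc2 K X →ₗ[K] Inc2 K X) (lt rt : X → X → X) : Prop :=
  ∀ a c : X,
    r (single (⟨(a, a), le_refl a⟩, ⟨(c, c), le_refl c⟩) 1)
      = single (⟨(lt a c, lt a c), le_refl _⟩, ⟨(rt a c, rt a c), le_refl _⟩) 1

/-- `r ⊗ id` acting on `D ⊗ D ⊗ D`. -/
noncomputable def r12 (r : Inc2 K X →ₗ[K] Inc2 K X) : Inc3 K X →ₗ[K] Inc3 K X :=
  Finsupp.lsum K fun t => LinearMap.toSpanSingleton K _ <|
    (r (single (t.1, t.2.1) 1)).sum fun p a => single (p.1, p.2, t.2.2) a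

/-- `id ⊗ r` acting on `D ⊗ D ⊗ D`. -/
noncomputable def r23 (r : Inc2 K X →ₗ[K] Inc2 K X) : Inc3 K X →ₗ[K] Inc3 K X :=
  Finsupp.lsum K fun t => LinearMap.toSpanSingleton K _ <|
    (r (single t.2 1)).sum fun p a => single (t.1, p) a

/-- The braid equation `r₁₂ ∘ r₂₃ ∘ r₁₂ = r₂₃ ∘ r₁₂ ∘ r₂₃` on `D ⊗ D ⊗ D`. -/
def BraidEqR (r : Inc2 K X →ₗ[K] Inc2 K X) : Prop :=
  r12 r ∘ₗ r23 r ∘ₗ r12 r = r23 r ∘ₗ r12 r ∘ₗ r23 r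

/-- The height of the interval `[a,b]`: the length of its longest chain. -/
noncomputable def hgt (a b : X) : ℕ∞ := Set.chainHeight (Set.Icc a b) (· < ·) - 1

/-- `LBE(S,T)` for `T = [a,b]×[c,d]×[e,f] ⊇ S = [g,h]×[i,j]×[k,l]`. -/
noncomputable def LBE (r : Inc2 K X →ₗ[K] Inc2 K X) (lt rt : X → X → X)
    (a b c d e f g h i j k l : X) : K :=
  ∑ x ∈ Finset.Icc a g, ∑ y ∈ Finset.Icc h b, ∑ w ∈ Finset.Icc c i,
  ∑ z ∈ Finset.Icc j d, ∑ u ∈ Finset.Icc e k, ∑ v ∈ Finset.Icc l f,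
    lam r a b c d (lt a w) (lt a z) (rt x c) (rt y c) *
    lam r (rt x c) (rt y c) e f (lt (rt x c) u) (lt (rt x c) v)
      (rt (rt g c) e) (rt (rt h c) e) *
    lam r (lt a w) (lt a z) (lt (rt x c) u) (lt (rt x c) v)
      (lt a (lt c k)) (lt a (lt c l))
      (rt (lt a i) (lt (rt a i) e)) (rt (lt a j) (lt (rt a j) e))

/-- `RBE(S,T)` for `T = [a,b]×[c,d]×[e,f] ⊇ S = [g,h]×[i,j]×[k,l]`. -/
noncomputable def RBE (r : Inc2 K X →ₗ[K] Inc2 K X) (lt rt : X → X → X)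
    (a b c d e f g h i j k l : X) : K :=
  ∑ x ∈ Finset.Icc a g, ∑ y ∈ Finset.Icc h b, ∑ w ∈ Finset.Icc c i,
  ∑ z ∈ Finset.Icc j d, ∑ u ∈ Finset.Icc e k, ∑ v ∈ Finset.Icc l f,
    lam r c d e f (lt c u) (lt c v) (rt w e) (rt z e) *
    lam r a b (lt c u) (lt c v) (lt a (lt c k)) (lt a (lt c l))
      (rt x (lt c u)) (rt y (lt c u)) *
    lam r (rt x (lt c u)) (rt y (lt c u)) (rt w e) (rt z e)
      (lt (rt a (lt i e)) (rt i e)) (lt (rt a (lt j e)) (rt j e))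
      (rt (rt g c) e) (rt (rt h c) e)

/-- the height of `T = [a,b]×[c,d]×[e,f]`. -/
noncomputable def hgt3 (a b c d e f : X) : ℕ∞ := hgt a b + hgt c d + hgt e f

/-- `LSQ(S,T)` for `T = [a,b]×[c,d] ⊇ S = [e,f]×[g,h]`. -/
noncomputable def LSQ (r : Inc2 K X →ₗ[K] Inc2 K X) (lt rt : X → X → X)
    (a b c d e f g h : X) : K :=
  ∑ x ∈ Finset.Icc a e, ∑ y ∈ Finset.Icc f b, ∑ w ∈ Finset.Icc c g, ∑ z ∈ Finset.Icc h d,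
    lam r a b c d (lt a w) (lt a z) (rt x c) (rt y c) *
    lam r (lt a w) (lt a z) (rt x c) (rt y c)
      (lt (lt a w) (rt e c)) (lt (lt a w) (rt f c))
      (rt (lt a g) (rt x c)) (rt (lt a h) (rt x c))

/-- `RSQ(S,T)` for `T = [a,b]×[c,d] ⊇ S = [e,f]×[g,h]`. -/
def RSQ (K : Type) [Field K] (a b c d e f g h : X) : K :=
  (if a = e then (1 : K) else 0) * (if b = f then 1 else 0) *
  (if c = g then 1 else 0) * (if d = h then 1 else 0)

/-- the height of `T = [a,b]×[c,d]`. -/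
noncomputable def hgt2 (a b c d : X) : ℕ∞ := hgt a b + hgt c d

/-- `r` has set-type square. -/
def SetSq (r : Inc2 K X →ₗ[K] Inc2 K X) (lt rt : X → X → X) : Prop :=
  ∀ (a b c d : X) (hab : a ≤ b) (hcd : c ≤ d)
    (h1 : lt (lt a c) (rt a c) ≤ lt (lt a c) (rt b c))
    (h2 : rt (lt a c) (rt a c) ≤ rt (lt a d) (rt a c)),
    r (r (single (⟨(a, b), hab⟩, ⟨(c, d), hcd⟩) 1))
      = single (⟨(lt (lt a c) (rt a c), lt (lt a c) (rt b c)), h1⟩,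
                ⟨(rt (lt a c) (rt a c), rt (lt a d) (rt a c)), h2⟩) 1

/-- `r` has set-type square up to height 1. -/
def SetSq1 (r : Inc2 K X →ₗ[K] Inc2 K X) (lt rt : X → X → X) : Prop :=
  ∀ (a b c d : X) (hab : a ≤ b) (hcd : c ≤ d), hgt a b + hgt c d = 1 →
    ∀ (h1 : lt (lt a c) (rt a c) ≤ lt (lt a c) (rt b c))
      (h2 : rt (lt a c) (rt a c) ≤ rt (lt a d) (rt a c)),
    r (r (single (⟨(a, b), hab⟩, ⟨(c, d), hcd⟩) 1))
      = single (⟨(lt (lt a c) (rt a c), lt (lt a c) (rt b c)), h1⟩,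
                ⟨(rt (lt a c) (rt a c), rt (lt a d) (rt a c)), h2⟩) 1

/-- `α_r(c)(a,b)` (for translations given by poset automorphisms `φl`, `φr`). -/
noncomputable def alphaR (r : Inc2 K X →ₗ[K] Inc2 K X) (φl φr : X → X) (c a b : X) : K :=
  lam r a b c c (φl c) (φl c) (φr a) (φr b)

/-- `β_r(c)(a,b)`. -/
noncomputable def betaR (r : Inc2 K X →ₗ[K] Inc2 K X) (φl φr : X → X) (c a b : X) : K :=
  lam r a b c c (φl c) (φl c) (φr a) (φr a)

/-- `α_l(c)(a,b)`. -/
noncomputable def alphaL (r : Inc2 K X →ₗ[K] Inc2 K X) (φl φr : X → X) (c a b : X) : K :=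
  lam r c c a b (φl a) (φl b) (φr c) (φr c)

/-- `β_l(c)(a,b)`. -/
noncomputable def betaL (r : Inc2 K X →ₗ[K] Inc2 K X) (φl φr : X → X) (c a b : X) : K :=
  lam r c c a b (φl a) (φl a) (φr c) (φr c)

/-- `Γ_{a|b|c|d}`. -/
noncomputable def Gam (r : Inc2 K X →ₗ[K] Inc2 K X) (φl φr : X → X) (a b c d : X) : K :=
  lam r a b c d (φl c) (φl c) (φr a) (φr a)

/-- `X` is connected. -/
def Connected (X : Type) [PartialOrder X] : Prop :=
  ∀ x y : X, Relation.ReflTransGen (fun a b : X => a ≤ b ∨ b ≤ a) x y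

end BraidPaper

/-!
Comultiplicativity writes every coefficient `λ_{a|b|c|d}^{e|f|g|h}` as a convolution over the
points `(x, w)` of `[a,b] × [c,d]`. On a covering pair `a ⋖ b` this leaves only two diagonal
terms, and non-degeneracy then forces `ᵃc = ᵇc` and `aᶜ ≤ bᶜ` (dually `aᶜ = aᵈ`, `ᵃc ≤ ᵃd` for
`c ⋖ d`); chains of covers extend this to all `a ≤ b`. By induction on the interval, a nonzero
`λ_{a|b|c|d}^{e|f|g|h}` has `(e, g) ≥ r₀(a, c)` and `(f, h) ≤ r₀(b, d)`. Splitting `[a,b] × [c,d]`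
at `(p, q)`, the injectivity of the translations then kills every term of the convolution except
the one through `(p, q)`: for `e ≤ ᵃq ≤ f` and `g ≤ pᶜ ≤ h`,
`λ_{a|b|c|d}^{e|f|g|h} = λ_{a|p|c|q}^{e|ᵃq|g|pᶜ} · λ_{p|b|q|d}^{ᵃq|f|pᶜ|h}`.
Applied to the three factors of each summand of `LBE` and `RBE` (the braid relation for `r₀`
identifies the middle points), this splits every summand for `(S, T)` into a summand for
`(S₁, T₁)` times one for `(S₂, T₂)`, and the six-fold sums factor accordingly.
-/

namespace BraidPaper

theorem sum6_eq_mul {α R : Type} [NonUnitalNonAssocSemiring R] {s₁ t₁ s₂ t₂ s₃ t₃ : Finset α}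
    {F : α → α → α → α → α → α → R} (A B : α → α → α → R)
    (hF : ∀ x ∈ s₁, ∀ y ∈ t₁, ∀ w ∈ s₂, ∀ z ∈ t₂, ∀ u ∈ s₃, ∀ v ∈ t₃,
      F x y w z u v = A x w u * B y z v) :
    ∑ x ∈ s₁, ∑ y ∈ t₁, ∑ w ∈ s₂, ∑ z ∈ t₂, ∑ u ∈ s₃, ∑ v ∈ t₃, F x y w z u v
      = (∑ x ∈ s₁, ∑ w ∈ s₂, ∑ u ∈ s₃, A x w u) * ∑ y ∈ t₁, ∑ z ∈ t₂, ∑ v ∈ t₃, B y z v := by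
  simp only [Finset.sum_mul_sum]
  exact Finset.sum_congr rfl fun x hx => Finset.sum_congr rfl fun y hy =>
    Finset.sum_congr rfl fun w hw => Finset.sum_congr rfl fun z hz =>
    Finset.sum_congr rfl fun u hu => Finset.sum_congr rfl fun v hv =>
    hF x hx y hy w hw z hz u hu v hv

theorem tensor_sum_apply {R ι κ : Type} [Semiring R] (f : ι →₀ R) (g : κ →₀ R) (ij : ι × κ) :
    (f.sum fun p α => g.sum fun q β => single (p, q) (α * β)) ij = f ij.1 * g ij.2 := by
  classical
  obtain ⟨i, j⟩ := ij
  have inner (p : ι) (α : R) :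
      (g.sum fun q β => single (p, q) (α * β)) (i, j) = if p = i then α * g j else 0 := by
    simp only [Finsupp.sum_apply, single_apply, Prod.mk.injEq, ite_and]
    split_ifs <;> simp +contextual
  rw [Finsupp.sum_apply]
  simp only [inner]
  simp +contextual

theorem lt_lt_eq_of_braid {X : Type} {lt rt : X → X → X} (hbr : Braid0 (r0map lt rt))
    (a c e : X) :
    lt (lt a c) (lt (rt a c) e) = lt a (lt c e) :=
  congrArg Prod.fst (congrFun hbr (a, c, e))

theorem rt_rt_eq_of_braid {X : Type} {lt rt : X → X → X} (hbr : Braid0 (r0map lt rt))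
    (a c e : X) :
    rt (rt a c) e = rt (rt a (lt c e)) (rt c e) :=
  congrArg (·.2.2) (congrFun hbr (a, c, e))

variable {K X : Type} [Field K] [PartialOrder X]

theorem comul2_apply [LocallyFiniteOrder X] (μ : Inc2 K X) {e m f g n h : X}
    (hem : e ≤ m) (hmf : m ≤ f) (hgn : g ≤ n) (hnh : n ≤ h) :
    comul2 μ ((⟨(e, m), hem⟩, ⟨(g, n), hgn⟩), (⟨(m, f), hmf⟩, ⟨(n, h), hnh⟩))
      = μ (⟨(e, f), hem.trans hmf⟩, ⟨(g, h), hgn.trans hnh⟩) := by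
  classical
  induction μ using Finsupp.induction_linear with
  | zero => simp
  | add μ ν hμ hν => simp [hμ, hν]
  | single pq k =>
    obtain ⟨⟨⟨a, b⟩, hab⟩, ⟨⟨c, d⟩, hcd⟩⟩ := pq
    simp only [comul2, lsum_single, LinearMap.toSpanSingleton_apply, Finsupp.smul_apply,
      Finset.sum_apply', single_apply, Prod.mk.injEq, Subtype.mk.injEq]
    by_cases H : (a = e ∧ b = f) ∧ c = g ∧ d = h
    · obtain ⟨⟨rfl, rfl⟩, rfl, rfl⟩ := H
      simp only [true_and, and_true, and_self, ite_and]
      rw [Finset.sum_attach (Finset.Icc a b) fun x =>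
        ∑ y ∈ (Finset.Icc c d).attach, if x = m then if (y : X) = n then (1 : K) else 0 else 0]
      simp [Finset.sum_ite_irrel, hem, hmf, hgn, hnh,
        Finset.sum_attach (Finset.Icc c d) fun y => if y = n then (1 : K) else 0]
    · rw [if_neg H]
      simp only [smul_eq_mul, mul_eq_zero]
      right
      refine Finset.sum_eq_zero fun x _ => Finset.sum_eq_zero fun y _ => if_neg ?_
      tauto

section Counit

variable [DecidableEq X]

theorem lcu_eq_zero {μ : Inc2 K X} (hμ : ∀ pq : Y X × Y X, pq.1.1.1 = pq.1.1.2 → μ pq = 0) :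
    lcu μ = 0 := by
  rw [lcu, lsum_apply]
  refine Finset.sum_eq_zero fun pq _ => ?_
  by_cases hd : pq.1.1.1 = pq.1.1.2 <;> simp [hd, hμ pq]

theorem rcu_eq_zero {μ : Inc2 K X} (hμ : ∀ pq : Y X × Y X, pq.2.1.1 = pq.2.1.2 → μ pq = 0) :
    rcu μ = 0 := by
  rw [rcu, lsum_apply]
  refine Finset.sum_eq_zero fun pq _ => ?_
  by_cases hd : pq.2.1.1 = pq.2.1.2 <;> simp [hd, hμ pq]

variable [LocallyFiniteOrder X] (r : Inc2 K X →ₗ[K] Inc2 K X)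

theorem ndeg2_single_diag (P : Y X) (c : X) :
    ndeg2 r (single (P, ⟨(c, c), le_rfl⟩) 1)
      = mapDomain (·, ⟨(c, c), le_rfl⟩) (lcu (r (single (P, ⟨(c, c), le_rfl⟩) 1))) := by
  rw [ndeg2, lsum_single, LinearMap.toSpanSingleton_apply, one_smul,
    Finset.sum_eq_single_of_mem ⟨c, Finset.left_mem_Icc.2 le_rfl⟩ (Finset.mem_attach _ _)]
  · rfl
  · intro y _ hy
    have := Finset.mem_Icc.1 y.2
    exact absurd (Subtype.ext (le_antisymm this.2 this.1)) hy

theorem ndeg1_single_diag (a : X) (Q : Y X) :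
    ndeg1 r (single (⟨(a, a), le_rfl⟩, Q) 1)
      = mapDomain (⟨(a, a), le_rfl⟩, ·) (rcu (r (single (⟨(a, a), le_rfl⟩, Q) 1))) := by
  rw [ndeg1, lsum_single, LinearMap.toSpanSingleton_apply, one_smul,
    Finset.sum_eq_single_of_mem ⟨a, Finset.left_mem_Icc.2 le_rfl⟩ (Finset.mem_attach _ _)]
  · rfl
  · intro x _ hx
    have := Finset.mem_Icc.1 x.2
    exact absurd (Subtype.ext (le_antisymm this.2 this.1)) hx

end Counit

structure OrderCompatible (lt rt : X → X → X) : Prop where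
  lt_eq_of_le_left {a b : X} : a ≤ b → ∀ c, lt a c = lt b c
  rt_le_of_le_left {a b : X} : a ≤ b → ∀ c, rt a c ≤ rt b c
  rt_eq_of_le_right (a : X) {c d : X} : c ≤ d → rt a c = rt a d
  lt_le_of_le_right (a : X) {c d : X} : c ≤ d → lt a c ≤ lt a d

variable {r : Inc2 K X →ₗ[K] Inc2 K X} {lt rt : X → X → X} [@DecidableRel X X (· ≤ ·)]

theorem lam_eq_apply {a b c d e f g h : X} (hab : a ≤ b) (hcd : c ≤ d) (hef : e ≤ f)
    (hgh : g ≤ h) :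
    lam r a b c d e f g h
      = r (single (⟨(a, b), hab⟩, ⟨(c, d), hcd⟩) 1) (⟨(e, f), hef⟩, ⟨(g, h), hgh⟩) := by
  simp [lam, hab, hcd, hef, hgh]

theorem le_of_lam_ne_zero {a b c d e f g h : X} (hne : lam r a b c d e f g h ≠ 0) :
    a ≤ b ∧ c ≤ d ∧ e ≤ f ∧ g ≤ h := by
  unfold lam at hne
  split_ifs at hne with h1 h2 h3 h4
  · exact ⟨h1, h2, h3, h4⟩
  all_goals exact absurd rfl hne

theorem eq_of_lam_diag_ne_zero (hind : Induces r lt rt) {a c e f g h : X}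
    (hne : lam r a a c c e f g h ≠ 0) :
    e = lt a c ∧ f = lt a c ∧ g = rt a c ∧ h = rt a c := by
  obtain ⟨-, -, hef, hgh⟩ := le_of_lam_ne_zero hne
  rw [lam_eq_apply le_rfl le_rfl hef hgh, hind, single_apply_ne_zero] at hne
  simp only [Prod.mk.injEq, Subtype.mk.injEq] at hne
  exact ⟨hne.1.1.1, hne.1.1.2, hne.1.2.1, hne.1.2.2⟩

variable [LocallyFiniteOrder X]

theorem lam_eq_sum_mul (hco : comul2 ∘ₗ r = tmap r r ∘ₗ comul2) {a b c d e f g h m n : X}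
    (hab : a ≤ b) (hcd : c ≤ d) (hem : e ≤ m) (hmf : m ≤ f) (hgn : g ≤ n) (hnh : n ≤ h) :
    lam r a b c d e f g h
      = ∑ x ∈ Finset.Icc a b, ∑ w ∈ Finset.Icc c d,
          lam r a x c w e m g n * lam r x b w d m f n h := by
  rw [lam_eq_apply hab hcd (hem.trans hmf) (hgn.trans hnh), ← comul2_apply _ hem hmf hgn hnh,
    ← LinearMap.comp_apply, hco, LinearMap.comp_apply, comul2, lsum_single,
    LinearMap.toSpanSingleton_apply, one_smul, map_sum, Finset.sum_apply',
    ← Finset.sum_attach (Finset.Icc a b)]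
  refine Finset.sum_congr rfl fun x _ => ?_
  rw [map_sum, Finset.sum_apply', ← Finset.sum_attach (Finset.Icc c d)]
  refine Finset.sum_congr rfl fun w _ => ?_
  rw [tmap, lsum_single, LinearMap.toSpanSingleton_apply, one_smul, tensor_sum_apply,
    lam_eq_apply (Finset.mem_Icc.1 x.2).1 (Finset.mem_Icc.1 w.2).1 hem hgn,
    lam_eq_apply (Finset.mem_Icc.1 x.2).2 (Finset.mem_Icc.1 w.2).2 hmf hnh]

theorem exists_lam_mul_ne_zero (hco : comul2 ∘ₗ r = tmap r r ∘ₗ comul2)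
    {a b c d e f g h m n : X} (hne : lam r a b c d e f g h ≠ 0)
    (hem : e ≤ m) (hmf : m ≤ f) (hgn : g ≤ n) (hnh : n ≤ h) :
    ∃ x ∈ Finset.Icc a b, ∃ w ∈ Finset.Icc c d,
      lam r a x c w e m g n ≠ 0 ∧ lam r x b w d m f n h ≠ 0 := by
  obtain ⟨hab, hcd, -, -⟩ := le_of_lam_ne_zero hne
  rw [lam_eq_sum_mul hco hab hcd hem hmf hgn hnh] at hne
  obtain ⟨x, hx, hne⟩ := Finset.exists_ne_zero_of_sum_ne_zero hne
  obtain ⟨w, hw, hne⟩ := Finset.exists_ne_zero_of_sum_ne_zero hne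
  exact ⟨x, hx, w, hw, mul_ne_zero_iff.1 hne⟩

theorem eq_or_eq_of_lam_covBy_left_ne_zero (hco : comul2 ∘ₗ r = tmap r r ∘ₗ comul2)
    (hind : Induces r lt rt) {a b : X} (hab : a ⋖ b) (c : X)
    (hcon : ¬(lt a c = lt b c ∧ rt a c ≤ rt b c)) {e g h : X}
    (hne : lam r a b c c e e g h ≠ 0) :
    (e = lt a c ∧ g = rt a c ∧ h = rt a c) ∨ (e = lt b c ∧ g = rt b c ∧ h = rt b c) := by
  obtain ⟨-, -, -, hgh⟩ := le_of_lam_ne_zero hne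
  obtain ⟨x, hx, w, hw, hne₁, hne₂⟩ := exists_lam_mul_ne_zero hco hne le_rfl le_rfl le_rfl hgh
  obtain ⟨hax, hxb⟩ := Finset.mem_Icc.1 hx
  rw [show w = c by simpa using hw] at hne₁ hne₂
  rcases hab.eq_or_eq hax hxb with rfl | rfl
  · obtain ⟨rfl, -, rfl, -⟩ := eq_of_lam_diag_ne_zero hind hne₁
    obtain ⟨x, hx, w, hw, hne₁, hne₂⟩ := exists_lam_mul_ne_zero hco hne le_rfl le_rfl hgh le_rfl
    obtain ⟨hax, hxb⟩ := Finset.mem_Icc.1 hx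
    rw [show w = c by simpa using hw] at hne₁ hne₂
    rcases hab.eq_or_eq hax hxb with rfl | rfl
    · obtain ⟨he, -, hg, hh⟩ := eq_of_lam_diag_ne_zero hind hne₁
      exact Or.inl ⟨he, hg, hh⟩
    · obtain ⟨he, -, rfl, -⟩ := eq_of_lam_diag_ne_zero hind hne₂
      exact absurd ⟨he, hgh⟩ hcon
  · obtain ⟨he, -, hg, hh⟩ := eq_of_lam_diag_ne_zero hind hne₂
    exact Or.inr ⟨he, hg, hh⟩

theorem eq_or_eq_of_lam_covBy_right_ne_zero (hco : comul2 ∘ₗ r = tmap r r ∘ₗ comul2)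
    (hind : Induces r lt rt) (a : X) {c d : X} (hcd : c ⋖ d)
    (hcon : ¬(rt a c = rt a d ∧ lt a c ≤ lt a d)) {e f g : X}
    (hne : lam r a a c d e f g g ≠ 0) :
    (e = lt a c ∧ f = lt a c ∧ g = rt a c) ∨ (e = lt a d ∧ f = lt a d ∧ g = rt a d) := by
  obtain ⟨-, -, hef, -⟩ := le_of_lam_ne_zero hne
  obtain ⟨x, hx, w, hw, hne₁, hne₂⟩ := exists_lam_mul_ne_zero hco hne le_rfl hef le_rfl le_rfl
  obtain ⟨hcw, hwd⟩ := Finset.mem_Icc.1 hw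
  rw [show x = a by simpa using hx] at hne₁ hne₂
  rcases hcd.eq_or_eq hcw hwd with rfl | rfl
  · obtain ⟨rfl, -, rfl, -⟩ := eq_of_lam_diag_ne_zero hind hne₁
    obtain ⟨x, hx, w, hw, hne₁, hne₂⟩ := exists_lam_mul_ne_zero hco hne hef le_rfl le_rfl le_rfl
    obtain ⟨hcw, hwd⟩ := Finset.mem_Icc.1 hw
    rw [show x = a by simpa using hx] at hne₁ hne₂
    rcases hcd.eq_or_eq hcw hwd with rfl | rfl
    · obtain ⟨he, hf, hg, -⟩ := eq_of_lam_diag_ne_zero hind hne₁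
      exact Or.inl ⟨he, hf, hg⟩
    · obtain ⟨hf, -, hg, -⟩ := eq_of_lam_diag_ne_zero hind hne₂
      exact absurd ⟨hg, hf ▸ hef⟩ hcon
  · obtain ⟨he, hf, hg, -⟩ := eq_of_lam_diag_ne_zero hind hne₂
    exact Or.inr ⟨he, hf, hg⟩

section Cover

variable [DecidableEq X]

theorem lt_eq_and_rt_le_of_covBy (hco : comul2 ∘ₗ r = tmap r r ∘ₗ comul2)
    (hnd : Function.Injective (ndeg2 r)) (hind : Induces r lt rt) {a b : X} (hab : a ⋖ b) (c : X) :
    lt a c = lt b c ∧ rt a c ≤ rt b c := by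
  -- otherwise `ab ⊗ cc` minus its components along `aa ⊗ cc` and `bb ⊗ cc` is a nonzero
  -- vector in the kernel of `ndeg2 r`
  by_contra hcon
  let cc : Y X := ⟨(c, c), le_rfl⟩
  let η := r (single (⟨(a, b), hab.le⟩, cc) 1)
  let tA : Y X × Y X := (⟨(lt a c, lt a c), le_rfl⟩, ⟨(rt a c, rt a c), le_rfl⟩)
  let tB : Y X × Y X := (⟨(lt b c, lt b c), le_rfl⟩, ⟨(rt b c, rt b c), le_rfl⟩)
  let v : Inc2 K X := single (⟨(a, b), hab.le⟩, cc) 1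
    - η tA • single (⟨(a, a), le_rfl⟩, cc) 1 - η tB • single (⟨(b, b), le_rfl⟩, cc) 1
  have hrv : r v = η - η tA • single tA 1 - η tB • single tB 1 := by
    simp only [v, map_sub, map_smul, cc, hind a c, hind b c, η, tA, tB]
  have hAB : tA ≠ tB := fun H => hcon ⟨congrArg (·.1.1.1) H, (congrArg (·.2.1.1) H).le⟩
  have hη : ∀ pq : Y X × Y X, pq.1.1.1 = pq.1.1.2 → pq ≠ tA → pq ≠ tB → η pq = 0 := by
    rintro ⟨⟨⟨e, e'⟩, hee⟩, ⟨⟨g, h⟩, hgh⟩⟩ (rfl : e = e') hA hB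
    by_contra hne
    rw [← lam_eq_apply (r := r)] at hne
    rcases eq_or_eq_of_lam_covBy_left_ne_zero hco hind hab c hcon hne with
      ⟨rfl, rfl, rfl⟩ | ⟨rfl, rfl, rfl⟩
    exacts [hA rfl, hB rfl]
  have hker : ndeg2 r v = mapDomain (·, cc) (lcu (r v)) := by
    simp only [v, cc, map_sub, map_smul, ndeg2_single_diag, mapDomain_sub, mapDomain_smul]
  have hlcu : lcu (r v) = 0 := by
    refine lcu_eq_zero fun pq hd => ?_
    rw [hrv]
    by_cases hA : pq = tA
    · subst hA; simp [hAB.symm]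
    by_cases hB : pq = tB
    · subst hB; simp [hAB]
    simp [Ne.symm hA, Ne.symm hB, hη pq hd hA hB]
  have hv : v = 0 := hnd (by rw [hker, hlcu, mapDomain_zero, map_zero])
  have := DFunLike.congr_fun hv (⟨(a, b), hab.le⟩, cc)
  simp [v, hab.ne, hab.ne'] at this

theorem rt_eq_and_lt_le_of_covBy (hco : comul2 ∘ₗ r = tmap r r ∘ₗ comul2)
    (hnd : Function.Injective (ndeg1 r)) (hind : Induces r lt rt) (a : X) {c d : X} (hcd : c ⋖ d) :
    rt a c = rt a d ∧ lt a c ≤ lt a d := by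
  by_contra hcon
  let aa : Y X := ⟨(a, a), le_rfl⟩
  let η := r (single (aa, ⟨(c, d), hcd.le⟩) 1)
  let tA : Y X × Y X := (⟨(lt a c, lt a c), le_rfl⟩, ⟨(rt a c, rt a c), le_rfl⟩)
  let tB : Y X × Y X := (⟨(lt a d, lt a d), le_rfl⟩, ⟨(rt a d, rt a d), le_rfl⟩)
  let v : Inc2 K X := single (aa, ⟨(c, d), hcd.le⟩) 1
    - η tA • single (aa, ⟨(c, c), le_rfl⟩) 1 - η tB • single (aa, ⟨(d, d), le_rfl⟩) 1
  have hrv : r v = η - η tA • single tA 1 - η tB • single tB 1 := by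
    simp only [v, map_sub, map_smul, aa, hind a c, hind a d, η, tA, tB]
  have hAB : tA ≠ tB := fun H => hcon ⟨congrArg (·.2.1.1) H, (congrArg (·.1.1.1) H).le⟩
  have hη : ∀ pq : Y X × Y X, pq.2.1.1 = pq.2.1.2 → pq ≠ tA → pq ≠ tB → η pq = 0 := by
    rintro ⟨⟨⟨e, f⟩, hef⟩, ⟨⟨g, g'⟩, hgg⟩⟩ (rfl : g = g') hA hB
    by_contra hne
    rw [← lam_eq_apply (r := r)] at hne
    rcases eq_or_eq_of_lam_covBy_right_ne_zero hco hind a hcd hcon hne with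
      ⟨rfl, rfl, rfl⟩ | ⟨rfl, rfl, rfl⟩
    exacts [hA rfl, hB rfl]
  have hker : ndeg1 r v = mapDomain (aa, ·) (rcu (r v)) := by
    simp only [v, aa, map_sub, map_smul, ndeg1_single_diag, mapDomain_sub, mapDomain_smul]
  have hrcu : rcu (r v) = 0 := by
    refine rcu_eq_zero fun pq hd => ?_
    rw [hrv]
    by_cases hA : pq = tA
    · subst hA; simp [hAB.symm]
    by_cases hB : pq = tB
    · subst hB; simp [hAB]
    simp [Ne.symm hA, Ne.symm hB, hη pq hd hA hB]
  have hv : v = 0 := hnd (by rw [hker, hrcu, mapDomain_zero, map_zero])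
  have := DFunLike.congr_fun hv (aa, ⟨(c, d), hcd.le⟩)
  simp [v, hcd.ne, hcd.ne'] at this

theorem orderCompatible_of_induces (hco : comul2 ∘ₗ r = tmap r r ∘ₗ comul2) (hnd : NonDeg r)
    (hind : Induces r lt rt) : OrderCompatible lt rt := by
  have left {a b : X} (hab : a ≤ b) (c : X) : lt a c = lt b c ∧ rt a c ≤ rt b c := by
    have hchain := le_iff_reflTransGen_covBy.1 hab
    clear hab
    induction hchain with
    | refl => exact ⟨rfl, le_rfl⟩
    | tail _ hcov ih =>
      have := lt_eq_and_rt_le_of_covBy hco hnd.2.1 hind hcov c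
      exact ⟨ih.1.trans this.1, ih.2.trans this.2⟩
  have right (a : X) {c d : X} (hcd : c ≤ d) : rt a c = rt a d ∧ lt a c ≤ lt a d := by
    have hchain := le_iff_reflTransGen_covBy.1 hcd
    clear hcd
    induction hchain with
    | refl => exact ⟨rfl, le_rfl⟩
    | tail _ hcov ih =>
      have := rt_eq_and_lt_le_of_covBy hco hnd.1.1 hind a hcov
      exact ⟨ih.1.trans this.1, ih.2.trans this.2⟩
  exact ⟨fun h c => (left h c).1, fun h c => (left h c).2,
    fun a _ _ h => (right a h).1, fun a _ _ h => (right a h).2⟩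

end Cover

theorem lt_le_and_rt_le_of_lam_ne_zero (hco : comul2 ∘ₗ r = tmap r r ∘ₗ comul2)
    (hind : Induces r lt rt) (hc : OrderCompatible lt rt) {a b c d e f g h : X}
    (hne : lam r a b c d e f g h ≠ 0) : lt a c ≤ e ∧ rt a c ≤ g := by
  obtain ⟨hab, hcd, hef, hgh⟩ := le_of_lam_ne_zero hne
  obtain ⟨x, hx, w, hw, hne₁, hne₂⟩ := exists_lam_mul_ne_zero hco hne le_rfl hef le_rfl hgh
  obtain ⟨hax, -⟩ := Finset.mem_Icc.1 hx
  obtain ⟨hcw, -⟩ := Finset.mem_Icc.1 hw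
  by_cases hxw : (a, c) = (x, w)
  · obtain ⟨rfl, rfl⟩ := Prod.mk.inj hxw
    obtain ⟨he, -, hg, -⟩ := eq_of_lam_diag_ne_zero hind hne₁
    exact ⟨he.ge, hg.ge⟩
  have hlt : (a, c) < (x, w) := lt_of_le_of_ne ⟨hax, hcw⟩ hxw
  have ih := lt_le_and_rt_le_of_lam_ne_zero hco hind hc hne₂
  constructor
  · calc lt a c = lt x c := hc.lt_eq_of_le_left hax c
      _ ≤ lt x w := hc.lt_le_of_le_right x hcw
      _ ≤ e := ih.1
  · calc rt a c ≤ rt x c := hc.rt_le_of_le_left hax c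
      _ = rt x w := hc.rt_eq_of_le_right x hcw
      _ ≤ g := ih.2
termination_by (Finset.Icc (a, c) (b, d)).card
decreasing_by
  exact Finset.card_lt_card (Finset.Icc_ssubset_Icc_left (Prod.mk_le_mk.2 ⟨hab, hcd⟩) hlt le_rfl)

theorem le_lt_and_le_rt_of_lam_ne_zero (hco : comul2 ∘ₗ r = tmap r r ∘ₗ comul2)
    (hind : Induces r lt rt) (hc : OrderCompatible lt rt) {a b c d e f g h : X}
    (hne : lam r a b c d e f g h ≠ 0) : f ≤ lt b d ∧ h ≤ rt b d := by
  obtain ⟨hab, hcd, hef, hgh⟩ := le_of_lam_ne_zero hne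
  obtain ⟨x, hx, w, hw, hne₁, hne₂⟩ := exists_lam_mul_ne_zero hco hne hef le_rfl hgh le_rfl
  obtain ⟨-, hxb⟩ := Finset.mem_Icc.1 hx
  obtain ⟨-, hwd⟩ := Finset.mem_Icc.1 hw
  by_cases hxw : (x, w) = (b, d)
  · obtain ⟨rfl, rfl⟩ := Prod.mk.inj hxw
    obtain ⟨-, hf, -, hh⟩ := eq_of_lam_diag_ne_zero hind hne₂
    exact ⟨hf.le, hh.le⟩
  have hlt : (x, w) < (b, d) := lt_of_le_of_ne ⟨hxb, hwd⟩ hxw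
  have ih := le_lt_and_le_rt_of_lam_ne_zero hco hind hc hne₁
  constructor
  · calc f ≤ lt x w := ih.1
      _ = lt b w := hc.lt_eq_of_le_left hxb w
      _ ≤ lt b d := hc.lt_le_of_le_right b hwd
  · calc h ≤ rt x w := ih.2
      _ ≤ rt b w := hc.rt_le_of_le_left hxb w
      _ = rt b d := hc.rt_eq_of_le_right b hwd
termination_by (Finset.Icc (a, c) (b, d)).card
decreasing_by
  exact Finset.card_lt_card (Finset.Icc_ssubset_Icc_right (Prod.mk_le_mk.2 ⟨hab, hcd⟩) le_rfl hlt)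

theorem lam_split (hco : comul2 ∘ₗ r = tmap r r ∘ₗ comul2) (hind : Induces r lt rt)
    (hc : OrderCompatible lt rt) (hnd0 : NonDeg0 lt rt) {a b c d p q E F G H M N : X}
    (hap : a ≤ p) (hpb : p ≤ b) (hcq : c ≤ q) (hqd : q ≤ d) (hM : lt a q = M) (hN : rt p c = N)
    (hE : E ≤ M) (hF : M ≤ F) (hG : G ≤ N) (hH : N ≤ H) :
    lam r a b c d E F G H = lam r a p c q E M G N * lam r p b q d M F N H := by
  subst hM hN
  have only_pq (x w : X)
      (hne : lam r a x c w E (lt a q) G (rt p c) * lam r x b w d (lt a q) F (rt p c) H ≠ 0) :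
      x = p ∧ w = q := by
    obtain ⟨hne₁, hne₂⟩ := mul_ne_zero_iff.1 hne
    obtain ⟨hax, hcw, -, -⟩ := le_of_lam_ne_zero hne₁
    have hup := le_lt_and_le_rt_of_lam_ne_zero hco hind hc hne₁
    have hlow := lt_le_and_rt_le_of_lam_ne_zero hco hind hc hne₂
    constructor
    · refine (hnd0.2 c).1 (?_ : rt x c = rt p c)
      rw [hc.rt_eq_of_le_right x hcw]
      exact le_antisymm hlow.2 hup.2
    · refine (hnd0.1 a).1 (?_ : lt a w = lt a q)
      rw [hc.lt_eq_of_le_left hax w]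
      exact le_antisymm hlow.1 hup.1
  rw [lam_eq_sum_mul hco (hap.trans hpb) (hcq.trans hqd) hE hF hG hH,
    Finset.sum_eq_single_of_mem p (Finset.mem_Icc.2 ⟨hap, hpb⟩) fun x _ hxp =>
      Finset.sum_eq_zero fun w _ => not_not.1 fun hne => hxp (only_pq x w hne).1,
    Finset.sum_eq_single_of_mem q (Finset.mem_Icc.2 ⟨hcq, hqd⟩) fun w _ hwq =>
      not_not.1 fun hne => hwq (only_pq p w hne).2]

variable (r lt rt) in
noncomputable def lbeTerm (a b c d e f g h i j k l x y w z u v : X) : K :=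
  lam r a b c d (lt a w) (lt a z) (rt x c) (rt y c) *
  lam r (rt x c) (rt y c) e f (lt (rt x c) u) (lt (rt x c) v) (rt (rt g c) e) (rt (rt h c) e) *
  lam r (lt a w) (lt a z) (lt (rt x c) u) (lt (rt x c) v) (lt a (lt c k)) (lt a (lt c l))
    (rt (lt a i) (lt (rt a i) e)) (rt (lt a j) (lt (rt a j) e))

variable (r lt rt) in
theorem LBE_eq_sum_lbeTerm (a b c d e f g h i j k l : X) :
    LBE r lt rt a b c d e f g h i j k l
      = ∑ x ∈ Finset.Icc a g, ∑ y ∈ Finset.Icc h b, ∑ w ∈ Finset.Icc c i,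
        ∑ z ∈ Finset.Icc j d, ∑ u ∈ Finset.Icc e k, ∑ v ∈ Finset.Icc l f,
          lbeTerm r lt rt a b c d e f g h i j k l x y w z u v :=
  rfl

theorem lbe_third_factor_split (hco : comul2 ∘ₗ r = tmap r r ∘ₗ comul2)
    (hind : Induces r lt rt) (hc : OrderCompatible lt rt) (hnd0 : NonDeg0 lt rt)
    (hbr : Braid0 (r0map lt rt)) {a c e i j k l p q s u v w x z : X}
    (hax : a ≤ x) (hxp : x ≤ p) (hcw : c ≤ w) (hwi : w ≤ i) (hiq : i ≤ q) (hqj : q ≤ j)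
    (hjz : j ≤ z) (heu : e ≤ u) (huk : u ≤ k) (hks : k ≤ s) (hsl : s ≤ l) (hlv : l ≤ v) :
    lam r (lt a w) (lt a z) (lt (rt x c) u) (lt (rt x c) v) (lt a (lt c k))
        (lt a (lt c l)) (rt (lt a i) (lt (rt a i) e)) (rt (lt a j) (lt (rt a j) e))
      = lam r (lt a w) (lt a q) (lt (rt x c) u) (lt (rt x c) s) (lt a (lt c k))
          (lt a (lt c s)) (rt (lt a i) (lt (rt a i) e)) (rt (lt a q) (lt (rt a q) e))
        * lam r (lt p q) (lt p z) (lt (rt p q) s) (lt (rt p q) v) (lt p (lt q s))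
          (lt p (lt q l)) (rt (lt p q) (lt (rt p q) s)) (rt (lt p j) (lt (rt p j) s)) := by
  have ⟨ltEq, rtLe, rtEq, ltLe⟩ := hc
  have hap := hax.trans hxp
  have hci := hcw.trans hwi
  have hcq := hci.trans hiq
  have hcj := hcq.trans hqj
  have hus := huk.trans hks
  have hes := heu.trans hus
  have hM : lt (lt a w) (lt (rt x c) s) = lt a (lt c s) := by
    rw [← ltEq (ltLe a hcw), ← ltEq (rtLe hax c) s, lt_lt_eq_of_braid hbr]
  have hN (q' t : X) (hcq' : c ≤ q') (het : e ≤ t) :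
      rt (lt a q') (lt (rt x c) t) = rt (lt a q') (lt (rt a q') e) := by
    rw [← ltEq (rtLe hax c) t, ← rtEq (lt a q') (ltLe (rt a c) het), rtEq a hcq']
  have hG : rt (lt a i) (lt (rt a i) e) ≤ rt (lt a q) (lt (rt a q) e) := by
    rw [← rtEq a hci, ← rtEq a hcq]
    exact rtLe (ltLe a hiq) _
  have hH : rt (lt a q) (lt (rt a q) e) ≤ rt (lt a j) (lt (rt a j) e) := by
    rw [← rtEq a hcq, ← rtEq a hcj]
    exact rtLe (ltLe a hqj) _
  rw [lam_split hco hind hc hnd0 (ltLe a (hwi.trans hiq)) (ltLe a (hqj.trans hjz)) (ltLe _ hus)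
    (ltLe _ (hsl.trans hlv)) hM (hN q u hcq heu) (ltLe a (ltLe c hks)) (ltLe a (ltLe c hsl)) hG hH,
    ← ltEq hap q, ← ltEq hap z, ← ltEq hap (lt q s), ← ltEq hap (lt q l), ← ltEq hap j,
    ← rtEq p hcq, ← rtEq p hcj, ← ltEq hcq s, ← ltEq hcq l,
    ← ltEq (rtLe hxp c) s, ← ltEq (rtLe hxp c) v, hN q s hcq hes, hN j s hcj hes]

theorem lbeTerm_split (hco : comul2 ∘ₗ r = tmap r r ∘ₗ comul2) (hind : Induces r lt rt)
    (hc : OrderCompatible lt rt) (hnd0 : NonDeg0 lt rt) (hbr : Braid0 (r0map lt rt))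
    {a b c d e f g h i j k l p q s x y w z u v : X}
    (hx : x ∈ Finset.Icc a g) (hp : p ∈ Finset.Icc g h) (hy : y ∈ Finset.Icc h b)
    (hw : w ∈ Finset.Icc c i) (hq : q ∈ Finset.Icc i j) (hz : z ∈ Finset.Icc j d)
    (hu : u ∈ Finset.Icc e k) (hs : s ∈ Finset.Icc k l) (hv : v ∈ Finset.Icc l f) :
    lbeTerm r lt rt a b c d e f g h i j k l x y w z u v
      = lbeTerm r lt rt a p c q e s g p i q k s x p w q u s
        * lbeTerm r lt rt p b q d s f p h q j s l p y q z s v := by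
  simp only [Finset.mem_Icc] at hx hp hy hw hq hz hu hs hv
  obtain ⟨⟨hax, hxg⟩, ⟨hgp, hph⟩, ⟨hhy, hyb⟩⟩ := And.intro hx (And.intro hp hy)
  obtain ⟨⟨hcw, hwi⟩, ⟨hiq, hqj⟩, ⟨hjz, hzd⟩⟩ := And.intro hw (And.intro hq hz)
  obtain ⟨⟨heu, huk⟩, ⟨hks, hsl⟩, ⟨hlv, hvf⟩⟩ := And.intro hu (And.intro hs hv)
  obtain ⟨hxp, hpy, hwq, hqz, hus, hsv⟩ : x ≤ p ∧ p ≤ y ∧ w ≤ q ∧ q ≤ z ∧ u ≤ s ∧ s ≤ v :=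
    ⟨hxg.trans hgp, hph.trans hhy, hwi.trans hiq, hqj.trans hjz, huk.trans hks, hsl.trans hlv⟩
  have hap := hax.trans hxp
  have hcq := hcw.trans hwq
  have hes := heu.trans hus
  have ⟨ltEq, rtLe, rtEq, ltLe⟩ := hc
  have h₁ : lam r a b c d (lt a w) (lt a z) (rt x c) (rt y c)
      = lam r a p c q (lt a w) (lt a q) (rt x c) (rt p c)
        * lam r p b q d (lt p q) (lt p z) (rt p q) (rt y q) := by
    rw [lam_split hco hind hc hnd0 hap (hpy.trans hyb) hcq (hqz.trans hzd) rfl rfl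
      (ltLe a hwq) (ltLe a hqz) (rtLe hxp c) (rtLe hpy c),
      ← ltEq hap q, ← ltEq hap z, ← rtEq p hcq, ← rtEq y hcq]
  have h₂ : lam r (rt x c) (rt y c) e f (lt (rt x c) u) (lt (rt x c) v)
        (rt (rt g c) e) (rt (rt h c) e)
      = lam r (rt x c) (rt p c) e s (lt (rt x c) u) (lt (rt x c) s)
          (rt (rt g c) e) (rt (rt p c) e)
        * lam r (rt p q) (rt y q) s f (lt (rt p q) s) (lt (rt p q) v)
          (rt (rt p q) s) (rt (rt h q) s) := by
    rw [lam_split hco hind hc hnd0 (rtLe hxp c) (rtLe hpy c) hes (hsv.trans hvf) rfl rfl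
      (ltLe _ hus) (ltLe _ hsv) (rtLe (rtLe hgp c) e) (rtLe (rtLe hph c) e),
      ← rtEq p hcq, ← rtEq y hcq, ← rtEq h hcq, ← ltEq (rtLe hxp c) s, ← ltEq (rtLe hxp c) v,
      ← rtEq (rt p c) hes, ← rtEq (rt h c) hes]
  rw [lbeTerm, lbeTerm, lbeTerm, h₁, h₂, lbe_third_factor_split hco hind hc hnd0 hbr hax hxp hcw
    hwi hiq hqj hjz heu huk hks hsl hlv]
  ring

variable (r lt rt) in
noncomputable def rbeTerm (a b c d e f g h i j k l x y w z u v : X) : K :=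
  lam r c d e f (lt c u) (lt c v) (rt w e) (rt z e) *
  lam r a b (lt c u) (lt c v) (lt a (lt c k)) (lt a (lt c l)) (rt x (lt c u)) (rt y (lt c u)) *
  lam r (rt x (lt c u)) (rt y (lt c u)) (rt w e) (rt z e)
    (lt (rt a (lt i e)) (rt i e)) (lt (rt a (lt j e)) (rt j e)) (rt (rt g c) e) (rt (rt h c) e)

variable (r lt rt) in
theorem RBE_eq_sum_rbeTerm (a b c d e f g h i j k l : X) :
    RBE r lt rt a b c d e f g h i j k l
      = ∑ x ∈ Finset.Icc a g, ∑ y ∈ Finset.Icc h b, ∑ w ∈ Finset.Icc c i,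
        ∑ z ∈ Finset.Icc j d, ∑ u ∈ Finset.Icc e k, ∑ v ∈ Finset.Icc l f,
          rbeTerm r lt rt a b c d e f g h i j k l x y w z u v :=
  rfl

theorem rbe_third_factor_split (hco : comul2 ∘ₗ r = tmap r r ∘ₗ comul2)
    (hind : Induces r lt rt) (hc : OrderCompatible lt rt) (hnd0 : NonDeg0 lt rt)
    (hbr : Braid0 (r0map lt rt)) {a c e g h i j p q s u w x y z : X}
    (hax : a ≤ x) (hxg : x ≤ g) (hgp : g ≤ p) (hph : p ≤ h) (hhy : h ≤ y) (hcw : c ≤ w)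
    (hwi : w ≤ i) (hiq : i ≤ q) (hqj : q ≤ j) (hjz : j ≤ z) (heu : e ≤ u) (hus : u ≤ s) :
    lam r (rt x (lt c u)) (rt y (lt c u)) (rt w e) (rt z e)
        (lt (rt a (lt i e)) (rt i e)) (lt (rt a (lt j e)) (rt j e)) (rt (rt g c) e) (rt (rt h c) e)
      = lam r (rt x (lt c u)) (rt p (lt c u)) (rt w e) (rt q e)
          (lt (rt a (lt i e)) (rt i e)) (lt (rt a (lt q e)) (rt q e))
          (rt (rt g c) e) (rt (rt p c) e)
        * lam r (rt p (lt q s)) (rt y (lt q s)) (rt q s) (rt z s)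
          (lt (rt p (lt q s)) (rt q s)) (lt (rt p (lt j s)) (rt j s))
          (rt (rt p q) s) (rt (rt h q) s) := by
  have ⟨ltEq, rtLe, rtEq, ltLe⟩ := hc
  have hxp := hxg.trans hgp
  have hap := hax.trans hxp
  have hci := hcw.trans hwi
  have hcq := hci.trans hiq
  have hcj := hcq.trans hqj
  have hes := heu.trans hus
  have hM (x' t : X) (hax' : a ≤ x') (hct : c ≤ t) :
      lt (rt x' (lt c u)) (rt t e) = lt (rt a (lt t e)) (rt t e) := by
    rw [← ltEq hct e, rtEq a (ltLe c heu), ltEq (rtLe hax' _)]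
  have hN : rt (rt p (lt c u)) (rt w e) = rt (rt p c) e := by
    rw [← rtEq p (ltLe c heu), ← rtEq _ (rtLe hcw e), ← rt_rt_eq_of_braid hbr]
  have hE : lt (rt a (lt i e)) (rt i e) ≤ lt (rt a (lt q e)) (rt q e) := by
    rw [← ltEq hci e, ← ltEq hcq e]
    exact ltLe _ (rtLe hiq e)
  have hF : lt (rt a (lt q e)) (rt q e) ≤ lt (rt a (lt j e)) (rt j e) := by
    rw [← ltEq hcq e, ← ltEq hcj e]
    exact ltLe _ (rtLe hqj e)
  rw [lam_split hco hind hc hnd0 (rtLe hxp _) (rtLe (hph.trans hhy) _) (rtLe (hwi.trans hiq) e)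
    (rtLe (hqj.trans hjz) e) (hM x q hax hcq) hN hE hF (rtLe (rtLe hgp c) e)
    (rtLe (rtLe hph c) e),
    ← ltEq hcq s, ← ltEq hcj s, ← rtEq p (ltLe c hus), ← rtEq y (ltLe c hus),
    ← rtEq q hes, ← rtEq z hes, ← rtEq j hes, ← rtEq p hcq, ← rtEq h hcq,
    ← rtEq (rt p c) hes, ← rtEq (rt h c) hes, hM p q hap hcq, hM p j hap hcj]

theorem rbeTerm_split (hco : comul2 ∘ₗ r = tmap r r ∘ₗ comul2) (hind : Induces r lt rt)
    (hc : OrderCompatible lt rt) (hnd0 : NonDeg0 lt rt) (hbr : Braid0 (r0map lt rt))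
    {a b c d e f g h i j k l p q s x y w z u v : X}
    (hx : x ∈ Finset.Icc a g) (hp : p ∈ Finset.Icc g h) (hy : y ∈ Finset.Icc h b)
    (hw : w ∈ Finset.Icc c i) (hq : q ∈ Finset.Icc i j) (hz : z ∈ Finset.Icc j d)
    (hu : u ∈ Finset.Icc e k) (hs : s ∈ Finset.Icc k l) (hv : v ∈ Finset.Icc l f) :
    rbeTerm r lt rt a b c d e f g h i j k l x y w z u v
      = rbeTerm r lt rt a p c q e s g p i q k s x p w q u s
        * rbeTerm r lt rt p b q d s f p h q j s l p y q z s v := by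
  simp only [Finset.mem_Icc] at hx hp hy hw hq hz hu hs hv
  obtain ⟨⟨hax, hxg⟩, ⟨hgp, hph⟩, ⟨hhy, hyb⟩⟩ := And.intro hx (And.intro hp hy)
  obtain ⟨⟨hcw, hwi⟩, ⟨hiq, hqj⟩, ⟨hjz, hzd⟩⟩ := And.intro hw (And.intro hq hz)
  obtain ⟨⟨heu, huk⟩, ⟨hks, hsl⟩, ⟨hlv, hvf⟩⟩ := And.intro hu (And.intro hs hv)
  obtain ⟨hxp, hpy, hwq, hqz, hus, hsv⟩ : x ≤ p ∧ p ≤ y ∧ w ≤ q ∧ q ≤ z ∧ u ≤ s ∧ s ≤ v :=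
    ⟨hxg.trans hgp, hph.trans hhy, hwi.trans hiq, hqj.trans hjz, huk.trans hks, hsl.trans hlv⟩
  have hap := hax.trans hxp
  have hcq := hcw.trans hwq
  have hes := heu.trans hus
  have ⟨ltEq, rtLe, rtEq, ltLe⟩ := hc
  have h₁ : lam r c d e f (lt c u) (lt c v) (rt w e) (rt z e)
      = lam r c q e s (lt c u) (lt c s) (rt w e) (rt q e)
        * lam r q d s f (lt q s) (lt q v) (rt q s) (rt z s) := by
    rw [lam_split hco hind hc hnd0 hcq (hqz.trans hzd) hes (hsv.trans hvf) rfl rfl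
      (ltLe c hus) (ltLe c hsv) (rtLe hwq e) (rtLe hqz e),
      ← ltEq hcq s, ← ltEq hcq v, ← rtEq q hes, ← rtEq z hes]
  have h₂ : lam r a b (lt c u) (lt c v) (lt a (lt c k)) (lt a (lt c l))
        (rt x (lt c u)) (rt y (lt c u))
      = lam r a p (lt c u) (lt c s) (lt a (lt c k)) (lt a (lt c s))
          (rt x (lt c u)) (rt p (lt c u))
        * lam r p b (lt q s) (lt q v) (lt p (lt q s)) (lt p (lt q l))
          (rt p (lt q s)) (rt y (lt q s)) := by
    rw [lam_split hco hind hc hnd0 hap (hpy.trans hyb) (ltLe c hus) (ltLe c hsv) rfl rfl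
      (ltLe a (ltLe c hks)) (ltLe a (ltLe c hsl)) (rtLe hxp _) (rtLe hpy _),
      ← ltEq hcq s, ← ltEq hcq v, ← ltEq hcq l, ← ltEq hap (lt c s), ← ltEq hap (lt c l),
      ← rtEq p (ltLe c hus), ← rtEq y (ltLe c hus)]
  rw [rbeTerm, rbeTerm, rbeTerm, h₁, h₂, rbe_third_factor_split hco hind hc hnd0 hbr hax hxg hgp
    hph hhy hcw hwi hiq hqj hjz heu hus]
  ring

theorem statement1_general {K X : Type} [Field K] [PartialOrder X] [DecidableEq X]
    [@DecidableRel X X (· ≤ ·)] [LocallyFiniteOrder X]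
    (r : Inc2 K X →ₗ[K] Inc2 K X) (lt rt : X → X → X)
    (hca : IsCoalgAuto r) (hnd : NonDeg r)
    (hind : Induces r lt rt) (hnd0 : NonDeg0 lt rt) (hbr0 : Braid0 (r0map lt rt))
    -- T = [a,b]×[c,d]×[e,f] ⊇ S = [g,h]×[i,j]×[k,l]
    (a b c d e f g h i j k l : X)
    -- (p,q,s) ∈ S
    (p q s : X) (hgp : g ≤ p) (hph : p ≤ h) (hiq : i ≤ q) (hqj : q ≤ j)
    (hks : k ≤ s) (hsl : s ≤ l) :
    LBE r lt rt a b c d e f g h i j k l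
      = LBE r lt rt a p c q e s g p i q k s * LBE r lt rt p b q d s f p h q j s l ∧
    RBE r lt rt a b c d e f g h i j k l
      = RBE r lt rt a p c q e s g p i q k s * RBE r lt rt p b q d s f p h q j s l := by
  have hc := orderCompatible_of_induces hca.2.1 hnd hind
  have hp : p ∈ Finset.Icc g h := Finset.mem_Icc.2 ⟨hgp, hph⟩
  have hq : q ∈ Finset.Icc i j := Finset.mem_Icc.2 ⟨hiq, hqj⟩
  have hs : s ∈ Finset.Icc k l := Finset.mem_Icc.2 ⟨hks, hsl⟩
  constructor
  · simp only [LBE_eq_sum_lbeTerm, Finset.Icc_self, Finset.sum_singleton]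
    exact sum6_eq_mul _ _ fun x hx y hy w hw z hz u hu v hv =>
      lbeTerm_split hca.2.1 hind hc hnd0 hbr0 hx hp hy hw hq hz hu hs hv
  · simp only [RBE_eq_sum_rbeTerm, Finset.Icc_self, Finset.sum_singleton]
    exact sum6_eq_mul _ _ fun x hx y hy w hw z hz u hu v hv =>
      rbeTerm_split hca.2.1 hind hc hnd0 hbr0 hx hp hy hw hq hz hu hs hv

/-- `LBE` and `RBE` factorize along the splitting of an inclusion
`S ⊆ T` of closed intervals of `X³` at a point `(p,q,s) ∈ S`. -/
theorem statement1 {K X : Type} [Field K] [PartialOrder X] [DecidableEq X]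
    [@DecidableRel X X (· ≤ ·)] [LocallyFiniteOrder X]
    (r : Inc2 K X →ₗ[K] Inc2 K X) (lt rt : X → X → X)
    (hca : IsCoalgAuto r) (hnd : NonDeg r)
    (hind : Induces r lt rt) (hnd0 : NonDeg0 lt rt) (hbr0 : Braid0 (r0map lt rt))
    -- T = [a,b]×[c,d]×[e,f] ⊇ S = [g,h]×[i,j]×[k,l]
    (a b c d e f g h i j k l : X)
    (hag : a ≤ g) (hgh : g ≤ h) (hhb : h ≤ b)
    (hci : c ≤ i) (hij : i ≤ j) (hjd : j ≤ d)
    (hek : e ≤ k) (hkl : k ≤ l) (hlf : l ≤ f)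
    -- (p,q,s) ∈ S
    (p q s : X) (hgp : g ≤ p) (hph : p ≤ h) (hiq : i ≤ q) (hqj : q ≤ j)
    (hks : k ≤ s) (hsl : s ≤ l) :
    LBE r lt rt a b c d e f g h i j k l
      = LBE r lt rt a p c q e s g p i q k s * LBE r lt rt p b q d s f p h q j s l ∧
    RBE r lt rt a b c d e f g h i j k l
      = RBE r lt rt a p c q e s g p i q k s * RBE r lt rt p b q d s f p h q j s l :=
  statement1_general r lt rt hca hnd hind hnd0 hbr0 a b c d e f g h i j k l p q s hgp hph hiq hqj
    hks hsl

end BraidPaper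
end

section
/- In the setting of the family of examples, assume moreover the constancy equalities (all α_l, α_r, β_l, β_r values independent of their arguments as in Proposition 'vectores constantes'), set α := α_l(a₀)(a₀,b₀), β_a := β_l(a₀)(a₀,b₀), β_b := β_l(b₀)(a₀,b₀), and let ε ∈ {1,−1} be such that α_l(b₀)(a₀,b₀) = εα, α_r(a₀)(a₀,b₀) = 1/α, α_r(b₀)(a₀,b₀) = ε/α, β_r(a₀)(a₀,b₀) = −β_a/α and β_r(b₀)(a₀,b₀) = −εβ_b/α. Then LBE(S,T) = RBE(S,T) holds for all inclusions S ⊆ T of closed intervals of X³ with h(T) ≤ 1 if and only if β_b(α−1) = β_a(εα−1). -/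
open Finsupp

namespace BraidPaper

variable {K X : Type} [Field K] [PartialOrder X] [DecidableEq X]
  [@DecidableRel X X (· ≤ ·)] [LocallyFiniteOrder X]

/-! ### The family of examples: `X = {a₀,…,a_{u−1}, b₀,…,b_{v−1}}` with `aᵢ < bⱼ` -/

/-- The underlying set of the height-one poset of the family of examples. -/
def Xf (u v : ℕ) : Type := Fin u ⊕ Fin v

instance (u v : ℕ) : DecidableEq (Xf u v) :=
  inferInstanceAs (DecidableEq (Fin u ⊕ Fin v))

instance (u v : ℕ) : Fintype (Xf u v) :=
  inferInstanceAs (Fintype (Fin u ⊕ Fin v))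

instance (u v : ℕ) : PartialOrder (Xf u v) where
  le x y := x = y ∨ (x.isLeft = true ∧ y.isRight = true)
  le_refl x := Or.inl rfl
  le_trans x y z hxy hyz := by
    rcases hxy with rfl | ⟨hx, hy⟩
    · exact hyz
    · rcases hyz with rfl | ⟨hy', hz⟩
      · exact Or.inr ⟨hx, hy⟩
      · cases y <;> simp_all
  le_antisymm x y hxy hyx := by
    rcases hxy with rfl | ⟨hx, hy⟩
    · rfl
    · rcases hyx with h | ⟨hy', hx'⟩
      · exact h.symm
      · cases x <;> simp_all

instance (u v : ℕ) : @DecidableRel (Xf u v) (Xf u v) (· ≤ ·) := fun x y =>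
  inferInstanceAs (Decidable (x = y ∨ (x.isLeft = true ∧ y.isRight = true)))

instance (u v : ℕ) : @DecidableRel (Xf u v) (Xf u v) (· < ·) := fun x y =>
  decidable_of_iff (x ≤ y ∧ ¬y ≤ x) lt_iff_le_not_ge.symm

instance (u v : ℕ) : LocallyFiniteOrder (Xf u v) := Fintype.toLocallyFiniteOrder

/-- The minimal elements `a_i`. -/
def Af {u v : ℕ} (i : Fin u) : Xf u v := Sum.inl i

/-- The maximal elements `b_j`. -/
def Bf {u v : ℕ} (j : Fin v) : Xf u v := Sum.inr j

/-- The poset automorphism `φ_l` determined by `σ_a` and `σ_b`. -/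
def phiL {u v : ℕ} (σa : Equiv.Perm (Fin u)) (σb : Equiv.Perm (Fin v)) :
    Xf u v → Xf u v := Sum.map σa σb

/-- The poset automorphism `φ_r` determined by `τ_a` and `τ_b`. -/
def phiR {u v : ℕ} (τa : Equiv.Perm (Fin u)) (τb : Equiv.Perm (Fin v)) :
    Xf u v → Xf u v := Sum.map τa τb

/-- A permutation of `Fin n` is an `n`-cycle (full cycle) iff it acts
transitively. -/
def IsFullCycle {n : ℕ} (ς : Equiv.Perm (Fin n)) : Prop :=
  ∀ i j : Fin n, ∃ m : ℕ, (ς ^ m) i = j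

/-- Every element of `K^×` has `n` distinct `n`-th roots. -/
def HasDistinctRoots (K : Type) [Field K] (n : ℕ) : Prop :=
  ∀ k : K, k ≠ 0 → ∃ S : Finset K, S.card = n ∧ ∀ x ∈ S, x ^ n = k


end BraidPaper

/-!
Comultiplicativity of `r`, applied to a basis element `(a,b) ⊗ (c,d)` of total height one, shows
that `r((a,b) ⊗ (c,d))` is supported on the three basis elements built from `r₀(a,c)` and
`r₀(b,d)`, and the counit makes its two diagonal coefficients opposite. Under the hypotheses,
`α_r = α_l⁻¹` and `β_r = -β_l / α_l`, where `α_l` and `β_l` depend only on whether the point is an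
`aᵢ` or a `bⱼ`. Working through the inclusions `S ⊆ T` with `h(T) ≤ 1`, each equation
`LBE(S,T) = RBE(S,T)` is then either a tautology or the relation `β_x + α_x β_y = β_y + α_y β_x`
for the two points `x, y` of `T`: the affine maps `t ↦ α_x t + β_x` must commute. For an `a` and
a `b` this reads `β_a + α β_b = β_b + ε α β_a`, that is, `β_b (α - 1) = β_a (ε α - 1)`.
-/

namespace BraidPaper

section IncidenceCoalgebra

variable {K X : Type} [Field K] [PartialOrder X]

lemma Y_pair_eq_iff {a b c d e f g h : X} {h₁ : a ≤ b} {h₂ : c ≤ d} {h₃ : e ≤ f}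
    {h₄ : g ≤ h} :
    ((⟨(a, b), h₁⟩, ⟨(c, d), h₂⟩) : Y X × Y X) = (⟨(e, f), h₃⟩, ⟨(g, h), h₄⟩) ↔
      a = e ∧ b = f ∧ c = g ∧ d = h := by
  simp [Prod.ext_iff, and_assoc]

lemma lam_of_le [@DecidableRel X X (· ≤ ·)] (r : Inc2 K X →ₗ[K] Inc2 K X)
    {a b c d e f g h : X} (h₁ : a ≤ b) (h₂ : c ≤ d) (h₃ : e ≤ f) (h₄ : g ≤ h) :
    lam r a b c d e f g h
      = r (single (⟨(a, b), h₁⟩, ⟨(c, d), h₂⟩) 1) (⟨(e, f), h₃⟩, ⟨(g, h), h₄⟩) := by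
  simp [lam, h₁, h₂, h₃, h₄]

lemma lam_eq_zero_of_not_le [@DecidableRel X X (· ≤ ·)] (r : Inc2 K X →ₗ[K] Inc2 K X)
    {a b c d e f g h : X} (hle : ¬(e ≤ f ∧ g ≤ h)) : lam r a b c d e f g h = 0 := by
  unfold lam
  split_ifs <;> tauto

lemma lam_of_induces [DecidableEq X] [@DecidableRel X X (· ≤ ·)]
    {r : Inc2 K X →ₗ[K] Inc2 K X} {lt rt : X → X → X} (hind : Induces r lt rt)
    (a c e f g h : X) :
    lam r a a c c e f g h =
      if e = lt a c ∧ f = lt a c ∧ g = rt a c ∧ h = rt a c then 1 else 0 := by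
  by_cases hle : e ≤ f ∧ g ≤ h
  · rw [lam_of_le r le_rfl le_rfl hle.1 hle.2, hind, Finsupp.single_apply]
    simp only [Y_pair_eq_iff, @eq_comm _ (lt _ _), @eq_comm _ (rt _ _)]
  · rw [lam_eq_zero_of_not_le r hle, if_neg]
    rintro ⟨rfl, rfl, rfl, rfl⟩
    exact hle ⟨le_rfl, le_rfl⟩

lemma eps2_single [DecidableEq X] (p : Y X × Y X) (k : K) :
    eps2 (single p k) = if p.1.1.1 = p.1.1.2 ∧ p.2.1.1 = p.2.1.2 then k else 0 := by
  rw [eps2, Finsupp.lsum_single]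
  split_ifs <;> rfl

lemma tmap_single_apply (r s : Inc2 K X →ₗ[K] Inc2 K X) (P Q P' Q' : Y X × Y X) :
    tmap r s (single (P, Q) 1) (P', Q') = r (single P 1) P' * s (single Q 1) Q' := by
  classical
  simp only [tmap, Finsupp.lsum_single, LinearMap.toSpanSingleton_apply, one_smul,
    Finsupp.sum_apply, Finsupp.single_apply, Prod.mk.injEq, ← ite_zero_mul_ite_zero]
  rw [← Finsupp.sum_ite_self_eq' (r (single P 1)), Finsupp.sum_mul]
  simp only [← Finsupp.mul_sum, Finsupp.sum_ite_self_eq']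

lemma r0map_injective {r : Inc2 K X →ₗ[K] Inc2 K X} {lt rt : X → X → X}
    (hr : Function.Injective r) (hind : Induces r lt rt) :
    Function.Injective (r0map lt rt) := by
  rintro ⟨a, c⟩ ⟨b, d⟩ h
  simp only [r0map, Prod.mk.injEq] at h
  have hsingle := hr <| (hind a c).trans <| by rw [hind b d]; simp only [h.1, h.2]
  simpa [Finsupp.single_left_inj one_ne_zero, Prod.ext_iff] using hsingle

variable [LocallyFiniteOrder X]

lemma comul2_apply_s11 (f : Inc2 K X) {s x t s' y t' : X}
    (hsx : s ≤ x) (hxt : x ≤ t) (hsy : s' ≤ y) (hyt : y ≤ t') :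
    comul2 f ((⟨(s, x), hsx⟩, ⟨(s', y), hsy⟩), (⟨(x, t), hxt⟩, ⟨(y, t'), hyt⟩))
      = f (⟨(s, t), hsx.trans hxt⟩, ⟨(s', t'), hsy.trans hyt⟩) := by
  classical
  have hx : x ∈ Finset.Icc s t := Finset.mem_Icc.2 ⟨hsx, hxt⟩
  have hy : y ∈ Finset.Icc s' t' := Finset.mem_Icc.2 ⟨hsy, hyt⟩
  rw [comul2, Finsupp.lsum_apply, Finsupp.sum_apply, Finsupp.sum,
    Finset.sum_eq_single (⟨(s, t), hsx.trans hxt⟩, ⟨(s', t'), hsy.trans hyt⟩)]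
  · rw [LinearMap.toSpanSingleton_apply, Finsupp.smul_apply, Finset.sum_apply',
      Finset.sum_eq_single ⟨x, hx⟩ (fun _ _ h => ?_) (by simp), Finset.sum_apply',
      Finset.sum_eq_single ⟨y, hy⟩ (fun _ _ h => ?_) (by simp)]
    · simp
    all_goals simp_all [Prod.ext_iff, Subtype.ext_iff]
  · intro p _ hp
    simp only [LinearMap.toSpanSingleton_apply, Finsupp.smul_apply, Finset.sum_apply',
      Finsupp.single_apply]
    refine smul_eq_zero_of_right _
      (Finset.sum_eq_zero fun _ _ => Finset.sum_eq_zero fun _ _ => if_neg ?_)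
    obtain ⟨⟨⟨a, b⟩, _⟩, ⟨⟨c, d⟩, _⟩⟩ := p
    simp_all [Prod.ext_iff]
  · intro hp
    simp [Finsupp.notMem_support_iff.mp hp]

lemma comul2_single_of_covBy {a b c d : X} (hcov : (a, c) ⋖ (b, d)) :
    comul2 (single (⟨(a, b), hcov.le.1⟩, ⟨(c, d), hcov.le.2⟩) (1 : K))
      = single ((⟨(a, a), le_rfl⟩, ⟨(c, c), le_rfl⟩),
          (⟨(a, b), hcov.le.1⟩, ⟨(c, d), hcov.le.2⟩)) 1
        + single ((⟨(a, b), hcov.le.1⟩, ⟨(c, d), hcov.le.2⟩),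
          (⟨(b, b), le_rfl⟩, ⟨(d, d), le_rfl⟩)) 1 := by
  rw [comul2, Finsupp.lsum_single, LinearMap.toSpanSingleton_apply, one_smul,
    ← Finset.sum_product']
  have hpair : ∀ x ∈ Finset.Icc a b, ∀ y ∈ Finset.Icc c d,
      (x = a ∧ y = c) ∨ (x = b ∧ y = d) := by
    intro x hx y hy
    have : (x, y) ∈ Set.Icc (a, c) (b, d) := by
      simp only [Finset.mem_Icc] at hx hy
      exact ⟨⟨hx.1, hy.1⟩, ⟨hx.2, hy.2⟩⟩
    simpa [hcov.Icc_eq] using this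
  have hac : a ∈ Finset.Icc a b := Finset.left_mem_Icc.2 hcov.le.1
  have hbd : b ∈ Finset.Icc a b := Finset.right_mem_Icc.2 hcov.le.1
  have hc : c ∈ Finset.Icc c d := Finset.left_mem_Icc.2 hcov.le.2
  have hd : d ∈ Finset.Icc c d := Finset.right_mem_Icc.2 hcov.le.2
  dsimp only
  refine Finset.sum_eq_add_of_mem
    ((⟨a, hac⟩, ⟨c, hc⟩) : {x // x ∈ Finset.Icc a b} × {y // y ∈ Finset.Icc c d})
    (⟨b, hbd⟩, ⟨d, hd⟩) (by simp) (by simp)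
    ?_ fun ⟨⟨x, hx⟩, ⟨y, hy⟩⟩ _ hne => ?_
  · simpa [Prod.ext_iff] using hcov.ne
  · exfalso
    rcases hpair x hx y hy with ⟨rfl, rfl⟩ | ⟨rfl, rfl⟩ <;> simp at hne

end IncidenceCoalgebra

section CoveringPair

variable {K X : Type} [Field K] [PartialOrder X] [DecidableEq X] [LocallyFiniteOrder X]
  {r : Inc2 K X →ₗ[K] Inc2 K X} {lt rt : X → X → X}

-- the coefficient of `((s,x),(s',y)) ⊗ ((x,t),(y,t'))` in `Δ ∘ r = (r ⊗ r) ∘ Δ`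
lemma apply_eq_of_covBy (hr : IsCoalgAuto r) (hind : Induces r lt rt) {a b c d : X}
    (hcov : (a, c) ⋖ (b, d)) {s x t s' y t' : X}
    (h₁ : s ≤ x) (h₂ : x ≤ t) (h₃ : s' ≤ y) (h₄ : y ≤ t') :
    r (single (⟨(a, b), hcov.le.1⟩, ⟨(c, d), hcov.le.2⟩) 1)
        (⟨(s, t), h₁.trans h₂⟩, ⟨(s', t'), h₃.trans h₄⟩)
      = (if s = lt a c ∧ x = lt a c ∧ s' = rt a c ∧ y = rt a c then
          r (single (⟨(a, b), hcov.le.1⟩, ⟨(c, d), hcov.le.2⟩) 1) (⟨(x, t), h₂⟩, ⟨(y, t'), h₄⟩)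
          else 0)
        + (if x = lt b d ∧ t = lt b d ∧ y = rt b d ∧ t' = rt b d then
          r (single (⟨(a, b), hcov.le.1⟩, ⟨(c, d), hcov.le.2⟩) 1) (⟨(s, x), h₁⟩, ⟨(s', y), h₃⟩)
          else 0) := by
  have hcomul := congrArg (· ((⟨(s, x), h₁⟩, ⟨(s', y), h₃⟩), (⟨(x, t), h₂⟩, ⟨(y, t'), h₄⟩)))
    (LinearMap.congr_fun hr.2.1 (single (⟨(a, b), hcov.le.1⟩, ⟨(c, d), hcov.le.2⟩) 1))
  rw [LinearMap.comp_apply, LinearMap.comp_apply, comul2_apply_s11, comul2_single_of_covBy hcov,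
    map_add, Finsupp.add_apply, tmap_single_apply, tmap_single_apply, hind, hind] at hcomul
  rw [hcomul]
  simp only [Finsupp.single_apply, Y_pair_eq_iff, ite_mul, mul_ite, one_mul, mul_one, zero_mul,
    mul_zero, @eq_comm _ (lt _ _), @eq_comm _ (rt _ _)]

lemma apply_eq_zero_of_covBy (hr : IsCoalgAuto r) (hind : Induces r lt rt) {a b c d : X}
    (hcov : (a, c) ⋖ (b, d)) {e f g h : X} (hef : e ≤ f) (hgh : g ≤ h)
    (hA : ¬(e = lt a c ∧ f = lt a c ∧ g = rt a c ∧ h = rt a c))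
    (hB : ¬(e = lt b d ∧ f = lt b d ∧ g = rt b d ∧ h = rt b d))
    (hAB : ¬(e = lt a c ∧ f = lt b d ∧ g = rt a c ∧ h = rt b d)) :
    r (single (⟨(a, b), hcov.le.1⟩, ⟨(c, d), hcov.le.2⟩) 1) (⟨(e, f), hef⟩, ⟨(g, h), hgh⟩)
      = 0 := by
  have hsplit_left := apply_eq_of_covBy hr hind hcov le_rfl hef le_rfl hgh
  rw [if_neg hB, add_zero] at hsplit_left
  by_cases hstart : e = lt a c ∧ g = rt a c
  · have hsplit_right := apply_eq_of_covBy hr hind hcov hef le_rfl hgh le_rfl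
    rw [if_neg hA, zero_add, if_neg (by tauto)] at hsplit_right
    exact hsplit_right
  · rw [if_neg (by tauto)] at hsplit_left
    exact hsplit_left

lemma apply_add_apply_eq_zero_of_covBy (hr : IsCoalgAuto r) (hind : Induces r lt rt)
    {a b c d : X} (hcov : (a, c) ⋖ (b, d)) :
    r (single (⟨(a, b), hcov.le.1⟩, ⟨(c, d), hcov.le.2⟩) 1)
        (⟨(lt a c, lt a c), le_rfl⟩, ⟨(rt a c, rt a c), le_rfl⟩)
      + r (single (⟨(a, b), hcov.le.1⟩, ⟨(c, d), hcov.le.2⟩) 1)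
        (⟨(lt b d, lt b d), le_rfl⟩, ⟨(rt b d, rt b d), le_rfl⟩) = 0 := by
  set F := r (single (⟨(a, b), hcov.le.1⟩, ⟨(c, d), hcov.le.2⟩) (1 : K))
  have hne : (lt a c, rt a c) ≠ (lt b d, rt b d) := (r0map_injective hr.1.1 hind).ne hcov.ne
  have hcounit : eps2 F = 0 := by
    rw [← LinearMap.comp_apply, hr.2.2, eps2_single, if_neg]
    simpa [Prod.ext_iff] using hcov.ne
  rw [← F.sum_single, map_finsuppSum, Finsupp.sum,
    Finset.sum_eq_add (⟨(lt a c, lt a c), le_rfl⟩, ⟨(rt a c, rt a c), le_rfl⟩)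
      (⟨(lt b d, lt b d), le_rfl⟩, ⟨(rt b d, rt b d), le_rfl⟩)] at hcounit
  · simpa [eps2_single] using hcounit
  · simpa [Prod.ext_iff] using hne
  · rintro ⟨⟨⟨e, f⟩, hef⟩, ⟨⟨g, h⟩, hgh⟩⟩ - ⟨hA, hB⟩
    rw [eps2_single]
    split_ifs with hdiag
    · obtain ⟨rfl : e = f, rfl : g = h⟩ := hdiag
      refine apply_eq_zero_of_covBy hr hind hcov hef hgh ?_ ?_ ?_
      · rintro ⟨rfl, -, rfl, -⟩; exact hA rfl
      · rintro ⟨rfl, -, rfl, -⟩; exact hB rfl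
      · rintro ⟨rfl, h₁, rfl, h₂⟩; exact hne (Prod.ext h₁ h₂)
    · rfl
  all_goals intro hp; simp [Finsupp.notMem_support_iff.mp hp]

theorem lam_of_covBy [@DecidableRel X X (· ≤ ·)] (hr : IsCoalgAuto r) (hind : Induces r lt rt)
    {a b c d : X} (hcov : (a, c) ⋖ (b, d)) (e f g h : X) :
    lam r a b c d e f g h =
      if e = lt a c ∧ f = lt b d ∧ g = rt a c ∧ h = rt b d then
        lam r a b c d (lt a c) (lt b d) (rt a c) (rt b d)
      else if e = lt a c ∧ f = lt a c ∧ g = rt a c ∧ h = rt a c then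
        lam r a b c d (lt a c) (lt a c) (rt a c) (rt a c)
      else if e = lt b d ∧ f = lt b d ∧ g = rt b d ∧ h = rt b d then
        -lam r a b c d (lt a c) (lt a c) (rt a c) (rt a c)
      else 0 := by
  split_ifs with hAB hA hB
  · obtain ⟨rfl, rfl, rfl, rfl⟩ := hAB; rfl
  · obtain ⟨rfl, rfl, rfl, rfl⟩ := hA; rfl
  · obtain ⟨rfl, rfl, rfl, rfl⟩ := hB
    rw [lam_of_le r hcov.le.1 hcov.le.2 le_rfl le_rfl,
      lam_of_le r hcov.le.1 hcov.le.2 le_rfl le_rfl]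
    linear_combination apply_add_apply_eq_zero_of_covBy hr hind hcov
  · by_cases hle : e ≤ f ∧ g ≤ h
    · rw [lam_of_le r hcov.le.1 hcov.le.2 hle.1 hle.2]
      exact apply_eq_zero_of_covBy hr hind hcov hle.1 hle.2 hA hB hAB
    · exact lam_eq_zero_of_not_le r hle

end CoveringPair

section Height

variable {X : Type} [PartialOrder X]

lemma hgt_self (x : X) : hgt x x = 0 := by
  rw [hgt, Set.Icc_self, ← Set.encard_eq_chainHeight_of_isChain _ IsChain.singleton,
    Set.encard_singleton, tsub_self]

lemma hgt_eq_one_of_covBy {a b : X} (h : a ⋖ b) : hgt a b = 1 := by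
  rw [hgt, h.Icc_eq, ← Set.encard_eq_chainHeight_of_isChain _ (IsChain.pair h.lt),
    Set.encard_pair h.lt.ne]
  rfl

end Height

section Example

variable {u v : ℕ}

lemma Xf_cases (x : Xf u v) : (∃ i, x = Af i) ∨ ∃ j, x = Bf j := by
  rcases x with i | j
  exacts [Or.inl ⟨i, rfl⟩, Or.inr ⟨j, rfl⟩]

@[simp] lemma Af_ne_Bf {i : Fin u} {j : Fin v} : (Af i : Xf u v) ≠ Bf j := Sum.inl_ne_inr

@[simp] lemma Bf_ne_Af {i : Fin u} {j : Fin v} : (Bf j : Xf u v) ≠ Af i := Sum.inr_ne_inl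

lemma Xf_le_iff {x y : Xf u v} : x ≤ y ↔ x = y ∨ ∃ i j, x = Af i ∧ y = Bf j := by
  constructor
  · rintro (rfl | ⟨hx, hy⟩)
    · exact Or.inl rfl
    · rcases x with i | i <;> rcases y with j | j
      all_goals first | exact Or.inr ⟨i, j, rfl, rfl⟩ | simp at hx hy
  · rintro (rfl | ⟨i, j, rfl, rfl⟩)
    exacts [le_rfl, Or.inr ⟨rfl, rfl⟩]

lemma Xf_lt_iff {x y : Xf u v} : x < y ↔ ∃ i j, x = Af i ∧ y = Bf j := by
  rw [lt_iff_le_and_ne, Xf_le_iff]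
  constructor
  · rintro ⟨h | h, hne⟩
    exacts [absurd h hne, h]
  · rintro ⟨i, j, rfl, rfl⟩
    exact ⟨Or.inr ⟨i, j, rfl, rfl⟩, Sum.inl_ne_inr⟩

lemma Af_covBy_Bf (i : Fin u) (j : Fin v) : (Af i : Xf u v) ⋖ Bf j := by
  refine ⟨Xf_lt_iff.2 ⟨i, j, rfl, rfl⟩, fun x hix hxj => ?_⟩
  obtain ⟨_, _, _, hx⟩ := Xf_lt_iff.1 hix
  obtain ⟨_, _, hx', _⟩ := Xf_lt_iff.1 hxj
  exact Sum.inr_ne_inl (hx.symm.trans hx')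

lemma Icc_Af_Bf (i : Fin u) (j : Fin v) :
    Finset.Icc (Af i : Xf u v) (Bf j) = {Af i, Bf j} := by
  rw [← Finset.coe_inj, Finset.coe_Icc, (Af_covBy_Bf i j).Icc_eq]
  simp

lemma Xf_Icc_cases {a g h b : Xf u v} (h₁ : a ≤ g) (h₂ : g ≤ h) (h₃ : h ≤ b) :
    (g = a ∧ h = a ∧ b = a) ∨
      ∃ i j, a = Af i ∧ b = Bf j ∧ (g = a ∧ h = a ∨ g = b ∧ h = b ∨ g = a ∧ h = b) := by
  rcases Xf_le_iff.1 (h₁.trans (h₂.trans h₃)) with rfl | ⟨i, j, rfl, rfl⟩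
  · exact Or.inl ⟨le_antisymm (h₂.trans h₃) h₁, le_antisymm h₃ (h₁.trans h₂), rfl⟩
  · have hmem : ∀ x, Af i ≤ x → x ≤ Bf j → x = Af i ∨ x = Bf j := fun x hix hxj => by
      have hx : x ∈ Set.Icc (Af i) (Bf j) := ⟨hix, hxj⟩
      rw [(Af_covBy_Bf i j).Icc_eq] at hx
      simpa using hx
    refine Or.inr ⟨i, j, rfl, rfl, ?_⟩
    rcases hmem g h₁ (h₂.trans h₃) with rfl | rfl <;> rcases hmem h (h₁.trans h₂) h₃ with rfl | rfl
    · exact Or.inl ⟨rfl, rfl⟩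
    · exact Or.inr (Or.inr ⟨rfl, rfl⟩)
    · simp [Xf_le_iff] at h₂
    · exact Or.inr (Or.inl ⟨rfl, rfl⟩)

section Translations

variable (σ : Equiv.Perm (Fin u)) (τ : Equiv.Perm (Fin v))

@[simp] lemma phiL_Af (i : Fin u) : phiL σ τ (Af i : Xf u v) = Af (σ i) := rfl
@[simp] lemma phiL_Bf (j : Fin v) : phiL σ τ (Bf j : Xf u v) = Bf (τ j) := rfl
@[simp] lemma phiR_Af (i : Fin u) : phiR σ τ (Af i : Xf u v) = Af (σ i) := rfl
@[simp] lemma phiR_Bf (j : Fin v) : phiR σ τ (Bf j : Xf u v) = Bf (τ j) := rfl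

end Translations

variable {K : Type}

def typeVal (p q : K) : Xf u v → K := Sum.elim (fun _ => p) (fun _ => q)

@[simp] lemma typeVal_Af (p q : K) (i : Fin u) : typeVal p q (Af i : Xf u v) = p := rfl

@[simp] lemma typeVal_Bf (p q : K) (j : Fin v) : typeVal p q (Bf j : Xf u v) = q := rfl

@[simp] lemma typeVal_phiL (p q : K) (σ : Equiv.Perm (Fin u)) (τ : Equiv.Perm (Fin v))
    (x : Xf u v) : typeVal p q (phiL σ τ x) = typeVal p q x := by
  rcases Xf_cases x with ⟨i, rfl⟩ | ⟨j, rfl⟩ <;> rfl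

@[simp] lemma typeVal_phiR (p q : K) (σ : Equiv.Perm (Fin u)) (τ : Equiv.Perm (Fin v))
    (x : Xf u v) : typeVal p q (phiR σ τ x) = typeVal p q x := by
  rcases Xf_cases x with ⟨i, rfl⟩ | ⟨j, rfl⟩ <;> rfl

variable [Field K]

/-- The affine maps `t ↦ A x * t + B x` pairwise commute. -/
def AffineComm {X : Type} (A B : X → K) : Prop := ∀ x y, B x + A x * B y = B y + A y * B x

lemma affineComm_typeVal_iff (i₀ : Fin u) (j₀ : Fin v) (αa αb βa βb : K) :
    AffineComm (typeVal αa αb : Xf u v → K) (typeVal βa βb) ↔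
      βb * (αa - 1) = βa * (αb - 1) := by
  constructor
  · intro h
    have hab := h (Af i₀) (Bf j₀)
    simp only [typeVal_Af, typeVal_Bf] at hab
    linear_combination hab
  · intro h x y
    rcases Xf_cases x with ⟨_, rfl⟩ | ⟨_, rfl⟩ <;> rcases Xf_cases y with ⟨_, rfl⟩ | ⟨_, rfl⟩ <;>
      simp only [typeVal_Af, typeVal_Bf]
    · linear_combination h
    · linear_combination -h

variable {σa τa : Equiv.Perm (Fin u)} {σb τb : Equiv.Perm (Fin v)}
  {r : Inc2 K (Xf u v) →ₗ[K] Inc2 K (Xf u v)}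

lemma lam_Af_Bf_point (hr : IsCoalgAuto r)
    (hind : Induces r (fun _ y => phiL σa σb y) (fun x _ => phiR τa τb x))
    (i : Fin u) (j : Fin v) (t e f g h : Xf u v) :
    lam r (Af i) (Bf j) t t e f g h =
      if e = phiL σa σb t ∧ f = phiL σa σb t ∧ g = Af (τa i) ∧ h = Bf (τb j) then
        alphaR r (phiL σa σb) (phiR τa τb) t (Af i) (Bf j)
      else if e = phiL σa σb t ∧ f = phiL σa σb t ∧ g = Af (τa i) ∧ h = Af (τa i) then
        betaR r (phiL σa σb) (phiR τa τb) t (Af i) (Bf j)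
      else if e = phiL σa σb t ∧ f = phiL σa σb t ∧ g = Bf (τb j) ∧ h = Bf (τb j) then
        -betaR r (phiL σa σb) (phiR τa τb) t (Af i) (Bf j)
      else 0 :=
  lam_of_covBy hr hind (Prod.mk_covBy_mk_iff_left.2 (Af_covBy_Bf i j)) e f g h

lemma lam_point_Af_Bf (hr : IsCoalgAuto r)
    (hind : Induces r (fun _ y => phiL σa σb y) (fun x _ => phiR τa τb x))
    (i : Fin u) (j : Fin v) (t e f g h : Xf u v) :
    lam r t t (Af i) (Bf j) e f g h =
      if e = Af (σa i) ∧ f = Bf (σb j) ∧ g = phiR τa τb t ∧ h = phiR τa τb t then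
        alphaL r (phiL σa σb) (phiR τa τb) t (Af i) (Bf j)
      else if e = Af (σa i) ∧ f = Af (σa i) ∧ g = phiR τa τb t ∧ h = phiR τa τb t then
        betaL r (phiL σa σb) (phiR τa τb) t (Af i) (Bf j)
      else if e = Bf (σb j) ∧ f = Bf (σb j) ∧ g = phiR τa τb t ∧ h = phiR τa τb t then
        -betaL r (phiL σa σb) (phiR τa τb) t (Af i) (Bf j)
      else 0 :=
  lam_of_covBy hr hind (Prod.mk_covBy_mk_iff_right.2 (Af_covBy_Bf i j)) e f g h

theorem forall_LBE_eq_RBE_iff (hr : IsCoalgAuto r)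
    (hind : Induces r (fun _ y => phiL σa σb y) (fun x _ => phiR τa τb x))
    {αa αb βa βb : K} (hαa : αa ≠ 0) (hαb : αb ≠ 0)
    (hαL : ∀ t i j, alphaL r (phiL σa σb) (phiR τa τb) t (Af i) (Bf j) = typeVal αa αb t)
    (hβL : ∀ t i j, betaL r (phiL σa σb) (phiR τa τb) t (Af i) (Bf j) = typeVal βa βb t)
    (hαR : ∀ t i j, alphaR r (phiL σa σb) (phiR τa τb) t (Af i) (Bf j) = (typeVal αa αb t)⁻¹)
    (hβR : ∀ t i j, betaR r (phiL σa σb) (phiR τa τb) t (Af i) (Bf j)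
      = -typeVal βa βb t / typeVal αa αb t)
    (i₀ : Fin u) (j₀ : Fin v) :
    (∀ a b c d e f g h i j k l : Xf u v,
      a ≤ g → g ≤ h → h ≤ b → c ≤ i → i ≤ j → j ≤ d → e ≤ k → k ≤ l → l ≤ f →
      hgt3 a b c d e f ≤ 1 →
      LBE r (fun _ y => phiL σa σb y) (fun x _ => phiR τa τb x) a b c d e f g h i j k l
        = RBE r (fun _ y => phiL σa σb y) (fun x _ => phiR τa τb x) a b c d e f g h i j k l)
    ↔ βb * (αa - 1) = βa * (αb - 1) := by
  rw [← affineComm_typeVal_iff i₀ j₀]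
  constructor
  · intro H x y
    -- `T = {x} × {y} × [a₀, b₀]` and `S = {x} × {y} × {a₀}`
    have := H x x y y (Af i₀) (Bf j₀) x x y y (Af i₀) (Af i₀) le_rfl le_rfl le_rfl le_rfl le_rfl
      le_rfl le_rfl le_rfl (Af_covBy_Bf i₀ j₀).le
      (by simp [hgt3, hgt_self, hgt_eq_one_of_covBy (Af_covBy_Bf i₀ j₀)])
    simpa [LBE, RBE, Icc_Af_Bf, lam_of_induces hind, lam_Af_Bf_point hr hind,
      lam_point_Af_Bf hr hind, hαL, hβL, hαR, hβR] using this
  · intro hC a b c d e f g h i j k l h₁ h₂ h₃ h₄ h₅ h₆ h₇ h₈ h₉ hT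
    have hA : ∀ t : Xf u v, typeVal αa αb t ≠ 0 := fun t => by
      rcases Xf_cases t with ⟨_, rfl⟩ | ⟨_, rfl⟩ <;> simpa
    rcases Xf_Icc_cases h₁ h₂ h₃ with ⟨rfl, rfl, rfl⟩ | ⟨i₁, j₁, rfl, rfl, hgh⟩ <;>
    rcases Xf_Icc_cases h₄ h₅ h₆ with ⟨rfl, rfl, rfl⟩ | ⟨i₂, j₂, rfl, rfl, hij⟩ <;>
    rcases Xf_Icc_cases h₇ h₈ h₉ with ⟨rfl, rfl, rfl⟩ | ⟨i₃, j₃, rfl, rfl, hkl⟩ <;>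
    norm_num [hgt3, hgt_self, hgt_eq_one_of_covBy (Af_covBy_Bf _ _)] at hT <;>
    (try rcases hgh with ⟨rfl, rfl⟩ | ⟨rfl, rfl⟩ | ⟨rfl, rfl⟩) <;>
    (try rcases hij with ⟨rfl, rfl⟩ | ⟨rfl, rfl⟩ | ⟨rfl, rfl⟩) <;>
    (try rcases hkl with ⟨rfl, rfl⟩ | ⟨rfl, rfl⟩ | ⟨rfl, rfl⟩) <;>
    simp only [LBE, RBE, Finset.Icc_self, Icc_Af_Bf, Finset.sum_singleton, Finset.mem_singleton,
      Finset.sum_insert, Finset.sum_ite_irrel, Finset.sum_const_zero, Finset.sum_neg_distrib,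
      lam_of_induces hind, lam_Af_Bf_point hr hind, lam_point_Af_Bf hr hind, hαL, hβL, hαR, hβR,
      phiL_Af, phiL_Bf, phiR_Af, phiR_Bf, typeVal_phiL, typeVal_phiR, Af_ne_Bf, Bf_ne_Af,
      not_false_eq_true, true_and, and_true, false_and, and_false, and_self, ↓reduceIte,
      ite_mul, mul_ite, one_mul, mul_one, zero_mul, mul_zero, neg_mul, mul_neg]
    -- each remaining goal is `hC` for the two points of `T`, possibly divided by `typeVal αa αb`
    all_goals grind [AffineComm]

end Example

theorem statement11_general {K : Type} [Field K] (u v : ℕ) (hu : 0 < u) (hv : 0 < v)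
    (σa τa : Equiv.Perm (Fin u)) (σb τb : Equiv.Perm (Fin v))
    (r : Inc2 K (Xf u v) →ₗ[K] Inc2 K (Xf u v))
    (hca : IsCoalgAuto r)
    (hind : Induces r (fun _ y => phiL σa σb y) (fun x _ => phiR τa τb x))
    (α βa βb ε : K) (hα : α ≠ 0) (hε : ε = 1 ∨ ε = -1)
    (hαla : ∀ (i k : Fin u) (l : Fin v),
      alphaL r (phiL σa σb) (phiR τa τb) (Af i) (Af k) (Bf l) = α)
    (hαlb : ∀ (j : Fin v) (k : Fin u) (l : Fin v),
      alphaL r (phiL σa σb) (phiR τa τb) (Bf j) (Af k) (Bf l) = ε * α)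
    (hαra : ∀ (i k : Fin u) (l : Fin v),
      alphaR r (phiL σa σb) (phiR τa τb) (Af i) (Af k) (Bf l) = 1 / α)
    (hαrb : ∀ (j : Fin v) (k : Fin u) (l : Fin v),
      alphaR r (phiL σa σb) (phiR τa τb) (Bf j) (Af k) (Bf l) = ε / α)
    (hβla : ∀ (i k : Fin u) (l : Fin v),
      betaL r (phiL σa σb) (phiR τa τb) (Af i) (Af k) (Bf l) = βa)
    (hβlb : ∀ (j : Fin v) (k : Fin u) (l : Fin v),
      betaL r (phiL σa σb) (phiR τa τb) (Bf j) (Af k) (Bf l) = βb)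
    (hβra : ∀ (i k : Fin u) (l : Fin v),
      betaR r (phiL σa σb) (phiR τa τb) (Af i) (Af k) (Bf l) = -βa / α)
    (hβrb : ∀ (j : Fin v) (k : Fin u) (l : Fin v),
      betaR r (phiL σa σb) (phiR τa τb) (Bf j) (Af k) (Bf l) = -(ε * βb) / α) :
    (∀ a b c d e f g h i j k l : Xf u v,
      a ≤ g → g ≤ h → h ≤ b → c ≤ i → i ≤ j → j ≤ d → e ≤ k → k ≤ l → l ≤ f →
      hgt3 a b c d e f ≤ 1 →
      LBE r (fun _ y => phiL σa σb y) (fun x _ => phiR τa τb x) a b c d e f g h i j k l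
        = RBE r (fun _ y => phiL σa σb y) (fun x _ => phiR τa τb x) a b c d e f g h i j k l)
    ↔ βb * (α - 1) = βa * (ε * α - 1) := by
  have hε_inv : ε⁻¹ = ε := by rcases hε with rfl | rfl <;> norm_num
  have hεα : ε * α ≠ 0 := mul_ne_zero (by rintro rfl; simp at hε) hα
  refine forall_LBE_eq_RBE_iff hca hind hα hεα ?_ ?_ ?_ ?_ ⟨0, hu⟩ ⟨0, hv⟩ <;>
    intro t i j <;> rcases Xf_cases t with ⟨t, rfl⟩ | ⟨t, rfl⟩
  · exact hαla t i j
  · exact hαlb t i j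
  · exact hβla t i j
  · exact hβlb t i j
  · rw [hαra, typeVal_Af, one_div]
  · rw [hαrb, typeVal_Bf, mul_inv, hε_inv, div_eq_mul_inv]
  · exact hβra t i j
  · rw [hβrb, typeVal_Bf, typeVal_Bf, div_eq_mul_inv, div_eq_mul_inv, mul_inv, hε_inv]
    ring

/-- in the family of examples, with constant `α`'s and `β`'s,
`LBE(S,T) = RBE(S,T)` holds for all inclusions `S ⊆ T` of closed intervals of
`X³` with `h(T) ≤ 1` iff `β_b(α−1) = β_a(εα−1)`. -/
theorem statement11 {K : Type} [Field K] (u v : ℕ) (hu : 0 < u) (hv : 0 < v)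
    (huv : Nat.Coprime u v) (hroots : HasDistinctRoots K (u * v))
    (σa τa : Equiv.Perm (Fin u)) (σb τb : Equiv.Perm (Fin v))
    (hcomma : Commute σa τa) (hcommb : Commute σb τb)
    (hfca : IsFullCycle (σa * τa)) (hfcb : IsFullCycle (σb * τb))
    (r : Inc2 K (Xf u v) →ₗ[K] Inc2 K (Xf u v))
    (hca : IsCoalgAuto r) (hnd : NonDeg r)
    (hind : Induces r (fun _ y => phiL σa σb y) (fun x _ => phiR τa τb x))
    (hsq1 : SetSq1 r (fun _ y => phiL σa σb y) (fun x _ => phiR τa τb x))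
    (α βa βb ε : K) (hα : α ≠ 0) (hε : ε = 1 ∨ ε = -1)
    (hαla : ∀ (i k : Fin u) (l : Fin v),
      alphaL r (phiL σa σb) (phiR τa τb) (Af i) (Af k) (Bf l) = α)
    (hαlb : ∀ (j : Fin v) (k : Fin u) (l : Fin v),
      alphaL r (phiL σa σb) (phiR τa τb) (Bf j) (Af k) (Bf l) = ε * α)
    (hαra : ∀ (i k : Fin u) (l : Fin v),
      alphaR r (phiL σa σb) (phiR τa τb) (Af i) (Af k) (Bf l) = 1 / α)
    (hαrb : ∀ (j : Fin v) (k : Fin u) (l : Fin v),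
      alphaR r (phiL σa σb) (phiR τa τb) (Bf j) (Af k) (Bf l) = ε / α)
    (hβla : ∀ (i k : Fin u) (l : Fin v),
      betaL r (phiL σa σb) (phiR τa τb) (Af i) (Af k) (Bf l) = βa)
    (hβlb : ∀ (j : Fin v) (k : Fin u) (l : Fin v),
      betaL r (phiL σa σb) (phiR τa τb) (Bf j) (Af k) (Bf l) = βb)
    (hβra : ∀ (i k : Fin u) (l : Fin v),
      betaR r (phiL σa σb) (phiR τa τb) (Af i) (Af k) (Bf l) = -βa / α)
    (hβrb : ∀ (j : Fin v) (k : Fin u) (l : Fin v),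
      betaR r (phiL σa σb) (phiR τa τb) (Bf j) (Af k) (Bf l) = -(ε * βb) / α) :
    (∀ a b c d e f g h i j k l : Xf u v,
      a ≤ g → g ≤ h → h ≤ b → c ≤ i → i ≤ j → j ≤ d → e ≤ k → k ≤ l → l ≤ f →
      hgt3 a b c d e f ≤ 1 →
      LBE r (fun _ y => phiL σa σb y) (fun x _ => phiR τa τb x) a b c d e f g h i j k l
        = RBE r (fun _ y => phiL σa σb y) (fun x _ => phiR τa τb x) a b c d e f g h i j k l)
    ↔ βb * (α - 1) = βa * (ε * α - 1) :=
  statement11_general u v hu hv σa τa σb τb r hca hind α βa βb ε hα hε hαla hαlb hαra hαrb hβla hβlb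
    hβra hβrb

end BraidPaper
end
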